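/- arXiv:2308.12752 — 6 statements merged into one kernel-verified Lean document; each statement's English description precedes it below -/
import Mathlib

section
/- Call a linear map E : M_a → M_b a subchannel supported on an orthogonal projection P ∈ M_a if E is completely positive (for every k ≥ 1, id_{M_k} ⊗ E maps positive semidefinite matrices to positive semidefinite matrices), E ∘ Ad_P = E, and Tr(E(X)) = Tr(PXP) for all X. Let ⋆ be any function assigning to each pair (E, ρ), with E : M_a → M_b linear and ρ ∈ M_a, a matrix ⋆(E, ρ) ∈ M_a ⊗ M_b. Consider the axioms: (CC) for every orthogonal projection P₀, every subchannel E supported on P₀, every finite family {P_i} of mutually orthogonal nonzero projections with Σ_i P_i = P₀ and E ∘ (Σ_i Ad_{P_i}) = E, and every probability distribution {λ_i}: ⋆(E, Σ_i λ_i P_i / Tr P_i) = Σ_i λ_i ⋆(E ∘ Ad_{P_i}, P_i / Tr P_i); (J) for every nonzero orthogonal projection P and every subchannel E supported on P: ⋆(E, P / Tr P) = (1 / Tr P) · D[E]; (CL) for every nonzero orthogonal projection P, every subchannel E supported on P, and every positive semidefinite ρ ∈ M_a with Tr ρ = 1, PρP = ρ, and [D[E], ρ ⊗ 1] = 0: ⋆(E,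 ρ) = D[E]·(ρ ⊗ 1). Then (CC) and (J) hold together if and only if (CL) holds. -/
open Matrix Kronecker BigOperators ComplexOrder

/-- `Mat n` is the algebra `M_n(ℂ)` of `n × n` complex matrices. -/
abbrev Mat (n : ℕ) : Type := Matrix (Fin n) (Fin n) ℂ

/-- The adjoint of a (linear) map `L : M_n → M_n` with respect to the
Hilbert–Schmidt inner product `⟨X, Y⟩ = Tr(Xᴴ * Y)`. -/
noncomputable def hsAdj {n : ℕ} (L : Mat n → Mat n) : Mat n → Mat n :=
  fun Y => Matrix.of fun i j => Matrix.trace ((L (Matrix.single i j (1 : ℂ)))ᴴ * Y)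

/-- The swap operator `F = Σ_{i,j} E_{ij} ⊗ E_{ji} ∈ M_n ⊗ M_n`. -/
noncomputable def swapOp (n : ℕ) : Matrix (Fin n × Fin n) (Fin n × Fin n) ℂ :=
  Matrix.of fun p q => if p.1 = q.2 ∧ p.2 = q.1 then (1 : ℂ) else 0

/-- `(id ⊗ E)(X)`: apply `E : M_a → M_b` to the second tensor factor. -/
noncomputable def idT {α : Type} {a b : ℕ} (E : Mat a → Mat b)
    (X : Matrix (α × Fin a) (α × Fin a) ℂ) : Matrix (α × Fin b) (α × Fin b) ℂ :=
  Matrix.of fun p q => E (Matrix.of fun x y => X (p.1, x) (q.1, y)) p.2 q.2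

/-- `(L ⊗ id)(X)`: apply `L : M_a → M_b` to the first tensor factor. -/
noncomputable def tId {α : Type} {a b : ℕ} (L : Mat a → Mat b)
    (X : Matrix (Fin a × α) (Fin a × α) ℂ) : Matrix (Fin b × α) (Fin b × α) ℂ :=
  Matrix.of fun p q => L (Matrix.of fun x y => X (x, p.2) (y, q.2)) p.1 q.1

/-- The Jamiołkowski channel state `D[E] := (id ⊗ E)(F)`. -/
noncomputable def chanState {a b : ℕ} (E : Mat a → Mat b) :
    Matrix (Fin a × Fin b) (Fin a × Fin b) ℂ := idT E (swapOp a)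

/-- Partial trace over the second tensor factor. -/
noncomputable def ptraceR {α β : Type} [Fintype β] (X : Matrix (α × β) (α × β) ℂ) :
    Matrix α α ℂ := Matrix.of fun i k => ∑ j, X (i, j) (k, j)

/-- Partial trace over the first tensor factor. -/
noncomputable def ptraceL {α β : Type} [Fintype α] (X : Matrix (α × β) (α × β) ℂ) :
    Matrix β β ℂ := Matrix.of fun j l => ∑ i, X (i, j) (i, l)

/-- The Fullwood–Parzygnat state over time function `E ⋆ ρ := ½{ρ ⊗ 1, D[E]}`. -/
noncomputable def FP {a b : ℕ} (E : Mat a → Mat b) (ρ : Mat a) :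
    Matrix (Fin a × Fin b) (Fin a × Fin b) ℂ :=
  (1/2 : ℂ) • ((ρ ⊗ₖ (1 : Mat b)) * chanState E + chanState E * (ρ ⊗ₖ (1 : Mat b)))

/-- An orthogonal projection: `P = P† = P²`. -/
def IsOrthProj {n : ℕ} (P : Mat n) : Prop := P.IsHermitian ∧ P * P = P

/-- `E : M_a → M_b` is completely positive: for every `k ≥ 1`, `id_{M_k} ⊗ E`
maps positive semidefinite matrices to positive semidefinite matrices. -/
def IsCP {a b : ℕ} (E : Mat a → Mat b) : Prop :=
  ∀ k : ℕ, 1 ≤ k → ∀ X : Matrix (Fin k × Fin a) (Fin k × Fin a) ℂ,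
    X.PosSemidef → (idT E X).PosSemidef

/-- `E : M_a → M_b` is a subchannel supported on the orthogonal projection `P`:
linear, completely positive, `E ∘ Ad_P = E`, and `Tr(E(X)) = Tr(PXP)`. -/
def IsSubchannel {a b : ℕ} (P : Mat a) (E : Mat a → Mat b) : Prop :=
  IsLinearMap ℂ E ∧ IsCP E ∧ (∀ X, E (P * X * P) = E X) ∧
    ∀ X, Matrix.trace (E X) = Matrix.trace (P * X * P)

/-- Axiom (CC): classical conditionability. -/
def AxCC {a b : ℕ}
    (S : (Mat a → Mat b) → Mat a → Matrix (Fin a × Fin b) (Fin a × Fin b) ℂ) : Prop :=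
  ∀ P0 : Mat a, IsOrthProj P0 → ∀ E : Mat a → Mat b, IsSubchannel P0 E →
    ∀ (k : ℕ) (P : Fin k → Mat a), (∀ i, IsOrthProj (P i)) →
      (∀ i j, i ≠ j → P i * P j = 0) → (∀ i, P i ≠ 0) → (∑ i, P i) = P0 →
      (∀ X, E (∑ i, P i * X * P i) = E X) →
      ∀ lam : Fin k → ℝ, (∀ i, 0 ≤ lam i) → (∑ i, lam i) = 1 →
        S E (∑ i, ((lam i : ℂ) * (Matrix.trace (P i))⁻¹) • P i) =
          ∑ i, (lam i : ℂ) •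
            S (fun X => E (P i * X * P i)) ((Matrix.trace (P i))⁻¹ • P i)

/-- Axiom (J): on the normalized projection `P / Tr P`, the state over time is
the (normalized) Jamiołkowski channel state. -/
def AxJ {a b : ℕ}
    (S : (Mat a → Mat b) → Mat a → Matrix (Fin a × Fin b) (Fin a × Fin b) ℂ) : Prop :=
  ∀ P : Mat a, IsOrthProj P → P ≠ 0 → ∀ E : Mat a → Mat b, IsSubchannel P E →
    S E ((Matrix.trace P)⁻¹ • P) = (Matrix.trace P)⁻¹ • chanState E

/-- Axiom (CL): the classical limit axiom. -/
def AxCL {a b : ℕ}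
    (S : (Mat a → Mat b) → Mat a → Matrix (Fin a × Fin b) (Fin a × Fin b) ℂ) : Prop :=
  ∀ P : Mat a, IsOrthProj P → P ≠ 0 → ∀ E : Mat a → Mat b, IsSubchannel P E →
    ∀ ρ : Mat a, ρ.PosSemidef → Matrix.trace ρ = 1 → P * ρ * P = ρ →
      chanState E * (ρ ⊗ₖ (1 : Mat b)) = (ρ ⊗ₖ (1 : Mat b)) * chanState E →
      S E ρ = chanState E * (ρ ⊗ₖ (1 : Mat b))

section infra
variable {a b : ℕ}

lemma kmul (Q R : Mat a) :
    (Q ⊗ₖ (1 : Mat b)) * (R ⊗ₖ (1 : Mat b)) = (Q * R) ⊗ₖ (1 : Mat b) := by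
  rw [← Matrix.mul_kronecker_mul, one_mul]

lemma ksmul (c : ℂ) (Q : Mat a) :
    (c • Q) ⊗ₖ (1 : Mat b) = c • (Q ⊗ₖ (1 : Mat b)) := Matrix.smul_kronecker c Q 1

lemma kadd (Q R : Mat a) :
    (Q + R) ⊗ₖ (1 : Mat b) = Q ⊗ₖ (1 : Mat b) + R ⊗ₖ (1 : Mat b) :=
  Matrix.add_kronecker Q R 1

lemma ksub (Q R : Mat a) :
    (Q - R) ⊗ₖ (1 : Mat b) = Q ⊗ₖ (1 : Mat b) - R ⊗ₖ (1 : Mat b) := by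
  ext p q
  simp [Matrix.kroneckerMap_apply, Matrix.sub_apply, sub_mul]

lemma ksum {ι : Type*} (s : Finset ι) (f : ι → Mat a) :
    (∑ i ∈ s, f i) ⊗ₖ (1 : Mat b) = ∑ i ∈ s, (f i ⊗ₖ (1 : Mat b)) := by
  ext p q
  simp [Matrix.kroneckerMap_apply, Matrix.sum_apply, Finset.sum_mul]

lemma chanState_apply (E : Mat a → Mat b) (i k : Fin a) (m n : Fin b) :
    chanState E (i, m) (k, n) = E (Matrix.single k i 1) m n := by
  have : (Matrix.of fun x y => swapOp a (i, x) (k, y)) = Matrix.single k i (1 : ℂ) := by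
    ext x y
    simp [swapOp, Matrix.single, Matrix.of_apply, and_comm, eq_comm]
  simp only [chanState, idT, Matrix.of_apply, this]

lemma chanState_congr {E F : Mat a → Mat b} (h : ∀ X, E X = F X) :
    chanState E = chanState F := by
  have : E = F := funext h
  rw [this]

lemma chanState_sum {ι : Type*} (s : Finset ι) (F : ι → (Mat a → Mat b)) :
    chanState (fun X => ∑ i ∈ s, F i X) = ∑ i ∈ s, chanState (F i) := by
  ext p q
  simp [chanState, idT, Matrix.sum_apply]

end infra

section pinch
variable {a b : ℕ}

lemma chanState_apply' (E : Mat a → Mat b) (i k : Fin a) (m n : Fin b) :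
    chanState E (i, m) (k, n) = E (Matrix.single k i 1) m n := by
  have : (Matrix.of fun x y => swapOp a (i, x) (k, y)) = Matrix.single k i (1 : ℂ) := by
    ext x y
    simp [swapOp, Matrix.single, Matrix.of_apply, and_comm, eq_comm]
  simp only [chanState, idT, Matrix.of_apply, this]

lemma conj_std (Q R : Mat a) (k i : Fin a) :
    Q * Matrix.single k i (1 : ℂ) * R =
      ∑ x : Fin a, ∑ y : Fin a, (Q x k * R i y) • Matrix.single x y (1 : ℂ) := by
  ext u v
  simp [Matrix.sum_apply, Matrix.mul_apply, Matrix.single, Matrix.of_apply,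
    Finset.sum_ite_eq, Finset.sum_ite_eq', mul_ite, ite_and]

lemma chanState_conj (E : Mat a → Mat b) (hE : IsLinearMap ℂ E) (Q : Mat a) :
    chanState (fun X => E (Q * X * Q)) =
      (Q ⊗ₖ (1 : Mat b)) * chanState E * (Q ⊗ₖ (1 : Mat b)) := by
  let E' : Mat a →ₗ[ℂ] Mat b := IsLinearMap.mk' E hE
  have hE' : ∀ X, E X = E' X := fun X => rfl
  ext ⟨i, m⟩ ⟨k, n⟩
  have lhs : chanState (fun X => E (Q * X * Q)) (i, m) (k, n) =
      ∑ x : Fin a, ∑ y : Fin a, Q x k * Q i y * E (Matrix.single x y 1) m n := by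
    rw [chanState_apply' (fun X => E (Q * X * Q)) i k m n]
    rw [conj_std, hE', map_sum]
    rw [Matrix.sum_apply]
    refine Finset.sum_congr rfl fun x _ => ?_
    rw [map_sum, Matrix.sum_apply]
    refine Finset.sum_congr rfl fun y _ => ?_
    rw [_root_.map_smul, ← hE']
    simp [smul_eq_mul]
  have rhs : ((Q ⊗ₖ (1 : Mat b)) * chanState E * (Q ⊗ₖ (1 : Mat b))) (i, m) (k, n) =
      ∑ x : Fin a, ∑ y : Fin a, Q i y * E (Matrix.single x y 1) m n * Q x k := by
    simp only [Matrix.mul_apply, Matrix.kroneckerMap_apply, Matrix.one_apply,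
      Fintype.sum_prod_type]
    simp only [mul_ite, ite_mul, mul_one, mul_zero, one_mul, zero_mul,
      Finset.sum_ite_eq, Finset.sum_ite_eq', Finset.mem_univ, if_true,
      Finset.sum_ite_irrel, Finset.sum_const_zero]
    refine Finset.sum_congr rfl fun x _ => ?_
    rw [Finset.sum_mul]
    refine Finset.sum_congr rfl fun y _ => ?_
    rw [chanState_apply']
  rw [lhs, rhs]
  refine Finset.sum_congr rfl fun x _ => Finset.sum_congr rfl fun y _ => ?_
  ring

lemma chanState_inj {E F : Mat a → Mat b} (hE : IsLinearMap ℂ E) (hF : IsLinearMap ℂ F)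
    (h : chanState E = chanState F) : ∀ X, E X = F X := by
  have hbasis : ∀ (k i : Fin a), E (Matrix.single k i 1) = F (Matrix.single k i 1) := by
    intro k i
    ext m n
    have := congrArg (fun M => M (i, m) (k, n)) h
    simpa [chanState_apply'] using this
  intro X
  let E' : Mat a →ₗ[ℂ] Mat b := IsLinearMap.mk' E hE
  let F' : Mat a →ₗ[ℂ] Mat b := IsLinearMap.mk' F hF
  have hX : X = ∑ i : Fin a, ∑ j : Fin a, (X i j) • Matrix.single i j (1 : ℂ) := by
    conv_lhs => rw [Matrix.matrix_eq_sum_single X]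
    refine Finset.sum_congr rfl fun i _ => Finset.sum_congr rfl fun j _ => ?_
    rw [Matrix.smul_single, smul_eq_mul, mul_one]
  show E' X = F' X
  rw [hX, map_sum, map_sum]
  refine Finset.sum_congr rfl fun i _ => ?_
  rw [map_sum, map_sum]
  refine Finset.sum_congr rfl fun j _ => ?_
  rw [_root_.map_smul, _root_.map_smul]
  show (X i j) • E _ = (X i j) • F _
  rw [hbasis]

end pinch


section psd
variable {a b : ℕ}

lemma proj_psd {n : ℕ} {P : Mat n} (hH : P.IsHermitian) (hI : P * P = P) : P.PosSemidef := by
  have : P = Pᴴ * P := by rw [hH.eq, hI]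
  rw [this]
  exact Matrix.posSemidef_conjTranspose_mul_self P

lemma psd_smul {n : ℕ} {M : Mat n} (h : M.PosSemidef) {c : ℝ} (hc : 0 ≤ c) :
    ((c : ℂ) • M).PosSemidef := by
  constructor
  · unfold Matrix.IsHermitian
    rw [Matrix.conjTranspose_smul, h.1.eq]
    congr 1
    simp
  · intro x
    have h2 := h.2 x
    have : dotProduct (star x) (((c : ℂ) • M) *ᵥ x) =
        (c : ℂ) * dotProduct (star x) (M *ᵥ x) := by
      rw [Matrix.smul_mulVec, dotProduct_smul, smul_eq_mul]
    exact (h.smul (by exact_mod_cast hc : (0 : ℂ) ≤ (c : ℂ))).2 x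

lemma psd_sum {n : ℕ} {ι : Type*} (s : Finset ι) (f : ι → Mat n)
    (h : ∀ i ∈ s, (f i).PosSemidef) : (∑ i ∈ s, f i).PosSemidef := by
  classical
  induction s using Finset.induction_on with
  | empty => simpa using Matrix.PosSemidef.zero
  | insert _ _ hx ih =>
    rw [Finset.sum_insert hx]
    exact Matrix.PosSemidef.add (h _ (Finset.mem_insert_self _ _))
      (ih fun i hi => h i (Finset.mem_insert_of_mem hi))

lemma proj_trace_pos {n : ℕ} {P : Mat n} (hH : P.IsHermitian) (hI : P * P = P) (h0 : P ≠ 0) :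
    ∃ r : ℝ, 0 < r ∧ P.trace = (r : ℂ) := by
  refine ⟨∑ j : Fin n, ∑ i : Fin n, Complex.normSq (P i j), ?_, ?_⟩
  · have hne : ∃ i j, P i j ≠ 0 := by
      by_contra hc
      push_neg at hc
      exact h0 (by ext i j; simpa using hc i j)
    obtain ⟨i, j, hij⟩ := hne
    refine Finset.sum_pos' (fun j _ => Finset.sum_nonneg fun i _ => Complex.normSq_nonneg _) ?_
    refine ⟨j, Finset.mem_univ j, Finset.sum_pos' (fun i _ => Complex.normSq_nonneg _)
      ⟨i, Finset.mem_univ i, ?_⟩⟩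
    exact Complex.normSq_pos.mpr hij
  · have : P.trace = (Pᴴ * P).trace := by rw [hH.eq, hI]
    rw [this, Matrix.trace]
    push_cast
    refine Finset.sum_congr rfl fun j _ => ?_
    rw [Matrix.diag_apply, Matrix.mul_apply]
    refine Finset.sum_congr rfl fun i _ => ?_
    rw [Matrix.conjTranspose_apply]
    exact (Complex.normSq_eq_conj_mul_self).symm

end psd

section sub
variable {a b : ℕ}

lemma idT_conj {k : ℕ} (E : Mat a → Mat b) (Q : Mat a)
    (X : Matrix (Fin k × Fin a) (Fin k × Fin a) ℂ) :
    idT (fun Y => E (Q * Y * Q)) X =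
      idT E (((1 : Matrix (Fin k) (Fin k) ℂ) ⊗ₖ Q) * X * ((1 : Matrix (Fin k) (Fin k) ℂ) ⊗ₖ Q)) := by
  have key : ∀ (i j : Fin k),
      (Matrix.of fun x y => (((1 : Matrix (Fin k) (Fin k) ℂ) ⊗ₖ Q) * X *
        ((1 : Matrix (Fin k) (Fin k) ℂ) ⊗ₖ Q)) (i, x) (j, y)) =
      Q * (Matrix.of fun x y => X (i, x) (j, y)) * Q := by
    intro i j
    ext x y
    simp only [Matrix.of_apply, Matrix.mul_apply, Matrix.kroneckerMap_apply, Matrix.one_apply,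
      Fintype.sum_prod_type]
    simp only [mul_ite, ite_mul, mul_one, mul_zero, one_mul, zero_mul,
      Finset.sum_ite_eq, Finset.sum_ite_eq', Finset.mem_univ, if_true,
      Finset.sum_ite_irrel, Finset.sum_const_zero]
  ext ⟨i, m⟩ ⟨j, n⟩
  simp only [idT, Matrix.of_apply]
  rw [key]

lemma one_kron_herm {k : ℕ} {Q : Mat a} (hQ : Q.IsHermitian) :
    ((1 : Matrix (Fin k) (Fin k) ℂ) ⊗ₖ Q)ᴴ = (1 : Matrix (Fin k) (Fin k) ℂ) ⊗ₖ Q := by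
  ext ⟨i, x⟩ ⟨j, y⟩
  simp only [Matrix.conjTranspose_apply, Matrix.kroneckerMap_apply, Matrix.one_apply, star_mul']
  have hq : star (Q y x) = Q x y := by rw [← Matrix.conjTranspose_apply, hQ.eq]
  by_cases hij : i = j
  · subst hij; simp [hq]
  · simp [hij, Ne.symm hij]

lemma cp_conj {E : Mat a → Mat b} (hcp : IsCP E) {Q : Mat a} (hQ : Q.IsHermitian) :
    IsCP (fun X => E (Q * X * Q)) := by
  intro k hk X hX
  rw [idT_conj]
  refine hcp k hk _ ?_
  have := hX.conjTranspose_mul_mul_same ((1 : Matrix (Fin k) (Fin k) ℂ) ⊗ₖ Q)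
  rwa [one_kron_herm hQ] at this

lemma lin_conj {E : Mat a → Mat b} (hE : IsLinearMap ℂ E) (Q : Mat a) :
    IsLinearMap ℂ (fun X => E (Q * X * Q)) := by
  constructor
  · intro X Y
    rw [show Q * (X + Y) * Q = Q * X * Q + Q * Y * Q by noncomm_ring]
    exact hE.map_add _ _
  · intro c X
    rw [show Q * (c • X) * Q = c • (Q * X * Q) by
      rw [Matrix.mul_smul, Matrix.smul_mul]]
    exact hE.map_smul _ _

lemma subchannel_restrict {P Q : Mat a} {E : Mat a → Mat b} (hE : IsSubchannel P E)
    (hQH : Q.IsHermitian) (hQI : Q * Q = Q) (hPQ : P * Q = Q) (hQP : Q * P = Q) :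
    IsSubchannel Q (fun X => E (Q * X * Q)) := by
  obtain ⟨hlin, hcp, hsupp, htr⟩ := hE
  refine ⟨lin_conj hlin Q, cp_conj hcp hQH, ?_, ?_⟩
  · intro X
    show E (Q * (Q * X * Q) * Q) = E (Q * X * Q)
    rw [show Q * (Q * X * Q) * Q = (Q * Q) * X * (Q * Q) by noncomm_ring, hQI]
  · intro X
    rw [htr (Q * X * Q),
      show P * (Q * X * Q) * P = (P * Q) * X * (Q * P) by noncomm_ring, hPQ, hQP]

end sub

section comm
variable {a b : ℕ}

lemma kdiag (f : Fin a → ℂ) :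
    (Matrix.diagonal f) ⊗ₖ (1 : Mat b) = Matrix.diagonal (fun p : Fin a × Fin b => f p.1) := by
  rw [show (1 : Mat b) = Matrix.diagonal (fun _ => (1 : ℂ)) from (Matrix.diagonal_one).symm,
    Matrix.diagonal_kronecker_diagonal]
  simp

lemma comm_transfer {U : Mat a} (hU : U * Uᴴ = 1) (hU' : Uᴴ * U = 1)
    (d : Fin a → ℝ) (g : Fin a → ℂ) (hg : ∀ i j, d i = d j → g i = g j)
    (D : Matrix (Fin a × Fin b) (Fin a × Fin b) ℂ)
    (hcomm : D * ((U * Matrix.diagonal (fun i => (d i : ℂ)) * Uᴴ) ⊗ₖ (1 : Mat b)) =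
      ((U * Matrix.diagonal (fun i => (d i : ℂ)) * Uᴴ) ⊗ₖ (1 : Mat b)) * D) :
    D * ((U * Matrix.diagonal g * Uᴴ) ⊗ₖ (1 : Mat b)) =
      ((U * Matrix.diagonal g * Uᴴ) ⊗ₖ (1 : Mat b)) * D := by
  have kUU : (U ⊗ₖ (1 : Mat b)) * (Uᴴ ⊗ₖ (1 : Mat b)) = 1 := by
    rw [kmul, hU, Matrix.one_kronecker_one]
  have kUU' : (Uᴴ ⊗ₖ (1 : Mat b)) * (U ⊗ₖ (1 : Mat b)) = 1 := by
    rw [kmul, hU', Matrix.one_kronecker_one]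
  set W := U ⊗ₖ (1 : Mat b) with hW
  set W' := Uᴴ ⊗ₖ (1 : Mat b) with hW'
  have expand : ∀ f : Fin a → ℂ,
      (U * Matrix.diagonal f * Uᴴ) ⊗ₖ (1 : Mat b) =
        W * Matrix.diagonal (fun p : Fin a × Fin b => f p.1) * W' := by
    intro f
    rw [hW, hW', ← kdiag, ← kmul, ← kmul]
  set D' := W' * D * W with hD'
  have hD : D = W * D' * W' := by
    rw [hD', ← Matrix.mul_assoc, ← Matrix.mul_assoc, kUU, Matrix.one_mul,
      Matrix.mul_assoc, kUU, Matrix.mul_one]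
  -- entrywise commutation of D' with diagonal d
  have hstep : D' * Matrix.diagonal (fun p : Fin a × Fin b => (d p.1 : ℂ)) =
      Matrix.diagonal (fun p : Fin a × Fin b => (d p.1 : ℂ)) * D' := by
    have h1 := hcomm
    rw [expand] at h1
    -- h1 : D * (W * Δ * W') = W * Δ * W' * D
    have : W' * (D * (W * Matrix.diagonal (fun p : Fin a × Fin b => (d p.1 : ℂ)) * W')) * W =
        W' * (W * Matrix.diagonal (fun p : Fin a × Fin b => (d p.1 : ℂ)) * W' * D) * W := by
      rw [h1]
    calc D' * Matrix.diagonal (fun p : Fin a × Fin b => (d p.1 : ℂ))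
        = W' * (D * (W * Matrix.diagonal (fun p : Fin a × Fin b => (d p.1 : ℂ)) * W')) * W := by
          rw [hD']
          simp only [Matrix.mul_assoc]
          rw [kUU']
          simp only [Matrix.mul_one, Matrix.one_mul]
      _ = W' * (W * Matrix.diagonal (fun p : Fin a × Fin b => (d p.1 : ℂ)) * W' * D) * W := this
      _ = Matrix.diagonal (fun p : Fin a × Fin b => (d p.1 : ℂ)) * D' := by
          rw [hD']
          simp only [Matrix.mul_assoc]
          rw [← Matrix.mul_assoc W' W, kUU', Matrix.one_mul]
  have hstep2 : D' * Matrix.diagonal (fun p : Fin a × Fin b => g p.1) =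
      Matrix.diagonal (fun p : Fin a × Fin b => g p.1) * D' := by
    ext p q
    rw [Matrix.mul_diagonal, Matrix.diagonal_mul]
    by_cases hz : D' p q = 0
    · rw [hz, mul_zero, zero_mul]
    · have := congrArg (fun M => M p q) hstep
      simp only [Matrix.mul_diagonal, Matrix.diagonal_mul] at this
      have hd : (d q.1 : ℂ) = (d p.1 : ℂ) := by
        have h2 : ((d p.1 : ℂ) - (d q.1 : ℂ)) * D' p q = 0 := by linear_combination -this
        rcases mul_eq_zero.mp h2 with h | h
        · exact (sub_eq_zero.mp h).symm
        · exact absurd h hz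
      have : d p.1 = d q.1 := by exact_mod_cast hd.symm
      rw [hg _ _ this, mul_comm]
  rw [expand, hD]
  calc (W * D' * W') * (W * Matrix.diagonal (fun p : Fin a × Fin b => g p.1) * W')
      = W * (D' * Matrix.diagonal (fun p : Fin a × Fin b => g p.1)) * W' := by
        simp only [Matrix.mul_assoc]
        rw [← Matrix.mul_assoc W' W, kUU', Matrix.one_mul]
    _ = W * (Matrix.diagonal (fun p : Fin a × Fin b => g p.1) * D') * W' := by rw [hstep2]
    _ = (W * Matrix.diagonal (fun p : Fin a × Fin b => g p.1) * W') * (W * D' * W') := by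
        simp only [Matrix.mul_assoc]
        rw [← Matrix.mul_assoc W' W, kUU', Matrix.one_mul]

end comm

section main
variable {a b : ℕ}

lemma sum_absorb_left {k : ℕ} (Q : Fin k → Mat a) (hidem : ∀ i, Q i * Q i = Q i)
    (horth : ∀ i j, i ≠ j → Q i * Q j = 0) (i : Fin k) : (∑ j, Q j) * Q i = Q i := by
  rw [Finset.sum_mul]
  rw [Finset.sum_eq_single i (fun j _ hj => horth j i hj) (by simp)]
  exact hidem i

lemma sum_absorb_right {k : ℕ} (Q : Fin k → Mat a) (hidem : ∀ i, Q i * Q i = Q i)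
    (horth : ∀ i j, i ≠ j → Q i * Q j = 0) (i : Fin k) : Q i * (∑ j, Q j) = Q i := by
  rw [Finset.mul_sum]
  rw [Finset.sum_eq_single i (fun j _ hj => horth i j (Ne.symm hj)) (by simp)]
  exact hidem i

lemma main_lemma (S : (Mat a → Mat b) → Mat a → Matrix (Fin a × Fin b) (Fin a × Fin b) ℂ)
    (hCC : AxCC S) (hJ : AxJ S) (P : Mat a) (hP : IsOrthProj P)
    (E : Mat a → Mat b) (hE : IsSubchannel P E)
    (k : ℕ) (Q : Fin k → Mat a) (hproj : ∀ i, IsOrthProj (Q i))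
    (horth : ∀ i j, i ≠ j → Q i * Q j = 0) (hne : ∀ i, Q i ≠ 0)
    (hsum : ∑ i, Q i = P)
    (hcm : ∀ i, chanState E * (Q i ⊗ₖ (1 : Mat b)) = (Q i ⊗ₖ (1 : Mat b)) * chanState E)
    (lam : Fin k → ℝ) (hlam : ∀ i, 0 ≤ lam i) (hlam1 : ∑ i, lam i = 1) :
    S E (∑ i, ((lam i : ℂ) * (Matrix.trace (Q i))⁻¹) • Q i) =
      chanState E * ((∑ i, ((lam i : ℂ) * (Matrix.trace (Q i))⁻¹) • Q i) ⊗ₖ (1 : Mat b)) := by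
  have hlinE := hE.1
  have hsupp := hE.2.2.1
  set D := chanState E with hDdef
  -- D = (P⊗1) D (P⊗1)
  have hD : D = (P ⊗ₖ (1 : Mat b)) * D * (P ⊗ₖ (1 : Mat b)) := by
    rw [hDdef, ← chanState_conj E hlinE P]
    exact (chanState_congr hsupp).symm
  have hDP : D * (P ⊗ₖ (1 : Mat b)) = D := by
    conv_lhs => rw [hD]
    rw [Matrix.mul_assoc, Matrix.mul_assoc, kmul, hP.2, ← Matrix.mul_assoc, ← hD]
  -- each Q i absorbed: (Qi⊗1) D (Qi⊗1) = D (Qi⊗1)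
  have habs : ∀ i, (Q i ⊗ₖ (1 : Mat b)) * D * (Q i ⊗ₖ (1 : Mat b)) = D * (Q i ⊗ₖ (1 : Mat b)) := by
    intro i
    rw [← hcm i, Matrix.mul_assoc, kmul, (hproj i).2]
  -- pinching
  have hlinpinch : IsLinearMap ℂ (fun X => E (∑ i, Q i * X * Q i)) := by
    constructor
    · intro X Y
      rw [show (∑ i, Q i * (X + Y) * Q i) = (∑ i, Q i * X * Q i) + (∑ i, Q i * Y * Q i) by
        rw [← Finset.sum_add_distrib]; exact Finset.sum_congr rfl fun i _ => by noncomm_ring]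
      exact hlinE.map_add _ _
    · intro c X
      rw [show (∑ i, Q i * (c • X) * Q i) = c • (∑ i, Q i * X * Q i) by
        rw [Finset.smul_sum]; exact Finset.sum_congr rfl fun i _ => by
          rw [Matrix.mul_smul, Matrix.smul_mul]]
      exact hlinE.map_smul _ _
  have hpinchD : chanState (fun X => E (∑ i, Q i * X * Q i)) = D := by
    have e1 : ∀ X : Mat a, E (∑ i, Q i * X * Q i) = ∑ i, E (Q i * X * Q i) := by
      intro X
      exact map_sum (IsLinearMap.mk' E hlinE) _ _
    rw [chanState_congr e1, chanState_sum]
    have e2 : ∀ i : Fin k, chanState (fun X => E (Q i * X * Q i)) = D * (Q i ⊗ₖ (1 : Mat b)) := by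
      intro i
      rw [chanState_conj E hlinE (Q i), ← hDdef, habs i]
    rw [Finset.sum_congr rfl fun i _ => e2 i, ← Finset.mul_sum, ← ksum, hsum, hDP]
  have hpinch : ∀ X, E (∑ i, Q i * X * Q i) = E X :=
    chanState_inj hlinpinch hlinE (by rw [hpinchD])
  -- CC application
  have hcc := hCC P hP E hE k Q hproj horth hne hsum hpinch lam hlam hlam1
  -- J application to each restricted subchannel
  have hPQ : ∀ i, P * Q i = Q i := by
    intro i; rw [← hsum]; exact sum_absorb_left Q (fun i => (hproj i).2) horth i
  have hQP : ∀ i, Q i * P = Q i := by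
    intro i; rw [← hsum]; exact sum_absorb_right Q (fun i => (hproj i).2) horth i
  have hterm : ∀ i : Fin k,
      S (fun X => E (Q i * X * Q i)) ((Matrix.trace (Q i))⁻¹ • Q i) =
        (Matrix.trace (Q i))⁻¹ • (D * (Q i ⊗ₖ (1 : Mat b))) := by
    intro i
    have hsub := subchannel_restrict hE (hproj i).1 (hproj i).2 (hPQ i) (hQP i)
    have hj := hJ (Q i) (hproj i) (hne i) _ hsub
    rw [hj, chanState_conj E hlinE (Q i), ← hDdef, habs i]
  rw [hcc, Finset.sum_congr rfl fun i _ => by rw [hterm i]]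
  rw [ksum, Finset.mul_sum]
  refine Finset.sum_congr rfl fun i _ => ?_
  rw [ksmul, Matrix.mul_smul, smul_smul]

end main

section back
variable {a b : ℕ}

lemma kzero : ((0 : Mat a) ⊗ₖ (1 : Mat b)) = 0 := Matrix.zero_kronecker 1

lemma trace_inv_coe {n : ℕ} {P : Mat n} {r : ℝ} (hr : 0 < r) (h : P.trace = (r : ℂ)) :
    (P.trace)⁻¹ = ((r⁻¹ : ℝ) : ℂ) := by rw [h]; push_cast; ring

lemma cl_to_j (S : (Mat a → Mat b) → Mat a → Matrix (Fin a × Fin b) (Fin a × Fin b) ℂ)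
    (hCL : AxCL S) : AxJ S := by
  intro P hP hPne E hE
  obtain ⟨r, hr, htr⟩ := proj_trace_pos hP.1 hP.2 hPne
  set D := chanState E with hDdef
  have hD : D = (P ⊗ₖ (1 : Mat b)) * D * (P ⊗ₖ (1 : Mat b)) := by
    rw [hDdef, ← chanState_conj E hE.1 P]
    exact (chanState_congr hE.2.2.1).symm
  have hDP : D * (P ⊗ₖ (1 : Mat b)) = (P ⊗ₖ (1 : Mat b)) * D * (P ⊗ₖ (1 : Mat b)) := by
    conv_lhs => rw [hD]
    rw [Matrix.mul_assoc (P ⊗ₖ (1 : Mat b) * D), kmul, hP.2]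
  have hPD : (P ⊗ₖ (1 : Mat b)) * D = (P ⊗ₖ (1 : Mat b)) * D * (P ⊗ₖ (1 : Mat b)) := by
    conv_lhs => rw [hD]
    rw [← Matrix.mul_assoc, ← Matrix.mul_assoc, kmul, hP.2]
  have htrne : P.trace ≠ 0 := by rw [htr]; exact_mod_cast hr.ne'
  have hcoe : (P.trace)⁻¹ = ((r⁻¹ : ℝ) : ℂ) := trace_inv_coe hr htr
  have hcl := hCL P hP hPne E hE ((P.trace)⁻¹ • P)
    (by rw [hcoe]; exact psd_smul (proj_psd hP.1 hP.2) (by positivity))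
    (by rw [Matrix.trace_smul, smul_eq_mul, inv_mul_cancel₀ htrne])
    (by rw [Matrix.mul_smul, Matrix.smul_mul, show P * P * P = P by rw [hP.2, hP.2]])
    (by conv_lhs => rw [ksmul, Matrix.mul_smul, hDP]
        conv_rhs => rw [ksmul, Matrix.smul_mul, hPD])
  rw [hcl, ksmul, Matrix.mul_smul, hDP, ← hD]

lemma cl_to_cc (S : (Mat a → Mat b) → Mat a → Matrix (Fin a × Fin b) (Fin a × Fin b) ℂ)
    (hCL : AxCL S) : AxCC S := by
  intro P0 hP0 E hE k Q hproj horth hne hsum hpinch lam hlam hlam1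
  set D := chanState E with hDdef
  have hPQ : ∀ i, P0 * Q i = Q i := by
    intro i; rw [← hsum]; exact sum_absorb_left Q (fun i => (hproj i).2) horth i
  have hQP : ∀ i, Q i * P0 = Q i := by
    intro i; rw [← hsum]; exact sum_absorb_right Q (fun i => (hproj i).2) horth i
  have hP0ne : P0 ≠ 0 := by
    intro h0
    rcases Nat.eq_zero_or_pos k with hk | hk
    · subst hk; simp at hlam1
    · exact hne ⟨0, hk⟩ (by rw [← hPQ ⟨0, hk⟩, h0, Matrix.zero_mul])
  have hDsum : D = ∑ i, (Q i ⊗ₖ (1 : Mat b)) * D * (Q i ⊗ₖ (1 : Mat b)) := by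
    have e1 : ∀ X : Mat a, E X = ∑ i, E (Q i * X * Q i) := by
      intro X
      conv_lhs => rw [← hpinch X]
      exact map_sum (IsLinearMap.mk' E hE.1) (fun i => Q i * X * Q i) Finset.univ
    rw [hDdef]
    conv_lhs => rw [chanState_congr e1, chanState_sum]
    exact Finset.sum_congr rfl fun i _ => by rw [chanState_conj E hE.1 (Q i)]
  have hcm : ∀ i, D * (Q i ⊗ₖ (1 : Mat b)) = (Q i ⊗ₖ (1 : Mat b)) * D := by
    intro i
    have hr : D * (Q i ⊗ₖ (1 : Mat b)) = (Q i ⊗ₖ (1 : Mat b)) * D * (Q i ⊗ₖ (1 : Mat b)) := by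
      conv_lhs => rw [hDsum]
      rw [Finset.sum_mul]
      rw [Finset.sum_eq_single i (fun j _ hj => by
        rw [Matrix.mul_assoc, kmul, horth j i hj, kzero, Matrix.mul_zero]) (by simp)]
      rw [Matrix.mul_assoc, Matrix.mul_assoc, kmul, (hproj i).2, ← Matrix.mul_assoc]
    have hl : (Q i ⊗ₖ (1 : Mat b)) * D = (Q i ⊗ₖ (1 : Mat b)) * D * (Q i ⊗ₖ (1 : Mat b)) := by
      conv_lhs => rw [hDsum]
      rw [Finset.mul_sum]
      rw [Finset.sum_eq_single i (fun j _ hj => by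
        rw [← Matrix.mul_assoc, ← Matrix.mul_assoc, kmul, horth i j (Ne.symm hj), kzero,
          Matrix.zero_mul, Matrix.zero_mul]) (by simp)]
      rw [← Matrix.mul_assoc, ← Matrix.mul_assoc, kmul, (hproj i).2]
    exact hr.trans hl.symm
  have htri : ∀ i, ∃ r : ℝ, 0 < r ∧ (Q i).trace = (r : ℂ) :=
    fun i => proj_trace_pos (hproj i).1 (hproj i).2 (hne i)
  set ρ := ∑ i, ((lam i : ℂ) * (Matrix.trace (Q i))⁻¹) • Q i with hρdef
  have hcoef : ∀ i, ∃ c : ℝ, 0 ≤ c ∧ ((lam i : ℂ) * (Matrix.trace (Q i))⁻¹) = ((c : ℝ) : ℂ) := by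
    intro i
    obtain ⟨r, hr, htr⟩ := htri i
    exact ⟨lam i * r⁻¹, mul_nonneg (hlam i) (le_of_lt (by positivity)), by rw [trace_inv_coe hr htr]; push_cast; ring⟩
  -- hypotheses of CL for (P0, E, ρ)
  have hps : ρ.PosSemidef := by
    refine psd_sum _ _ fun i _ => ?_
    obtain ⟨c, hc, hcoe⟩ := hcoef i
    rw [hcoe]
    exact psd_smul (proj_psd (hproj i).1 (hproj i).2) hc
  have htrρ : ρ.trace = 1 := by
    rw [hρdef, Matrix.trace_sum]
    have : ∀ i ∈ Finset.univ, (((lam i : ℂ) * (Matrix.trace (Q i))⁻¹) • Q i).trace = (lam i : ℂ) := by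
      intro i _
      obtain ⟨r, hr, htr⟩ := htri i
      rw [Matrix.trace_smul, smul_eq_mul, mul_assoc, inv_mul_cancel₀ (by
        rw [htr]; exact_mod_cast hr.ne'), mul_one]
    rw [Finset.sum_congr rfl this]
    rw [← Complex.ofReal_sum]
    rw [hlam1]
    norm_num
  have hPρP : P0 * ρ * P0 = ρ := by
    rw [hρdef, Finset.mul_sum, Finset.sum_mul]
    refine Finset.sum_congr rfl fun i _ => ?_
    rw [Matrix.mul_smul, Matrix.smul_mul, show P0 * Q i * P0 = Q i by rw [hPQ i, hQP i]]
  have hcmρ : D * (ρ ⊗ₖ (1 : Mat b)) = (ρ ⊗ₖ (1 : Mat b)) * D := by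
    rw [hρdef, ksum, Finset.mul_sum, Finset.sum_mul]
    refine Finset.sum_congr rfl fun i _ => ?_
    rw [ksmul, Matrix.mul_smul, Matrix.smul_mul, hcm i]
  have hL := hCL P0 hP0 hP0ne E hE ρ hps htrρ hPρP hcmρ
  rw [hL]
  -- now each term on the RHS
  have hterm : ∀ i : Fin k,
      S (fun X => E (Q i * X * Q i)) ((Matrix.trace (Q i))⁻¹ • Q i) =
        (Matrix.trace (Q i))⁻¹ • (D * (Q i ⊗ₖ (1 : Mat b))) := by
    intro i
    obtain ⟨r, hr, htr⟩ := htri i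
    have htrne : (Q i).trace ≠ 0 := by rw [htr]; exact_mod_cast hr.ne'
    have hsub := subchannel_restrict hE (hproj i).1 (hproj i).2 (hPQ i) (hQP i)
    have hDi : chanState (fun X => E (Q i * X * Q i)) = D * (Q i ⊗ₖ (1 : Mat b)) := by
      rw [chanState_conj E hE.1 (Q i), ← hDdef, ← hcm i, Matrix.mul_assoc, kmul, (hproj i).2]
    have habs2 : (D * (Q i ⊗ₖ (1 : Mat b))) * (Q i ⊗ₖ (1 : Mat b)) = D * (Q i ⊗ₖ (1 : Mat b)) := by
      rw [Matrix.mul_assoc, kmul, (hproj i).2]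
    have hcli := hCL (Q i) (hproj i) (hne i) _ hsub ((Matrix.trace (Q i))⁻¹ • Q i)
      (by rw [trace_inv_coe hr htr]; exact psd_smul (proj_psd (hproj i).1 (hproj i).2) (by positivity))
      (by rw [Matrix.trace_smul, smul_eq_mul, inv_mul_cancel₀ htrne])
      (by rw [Matrix.mul_smul, Matrix.smul_mul,
            show Q i * Q i * Q i = Q i by rw [(hproj i).2, (hproj i).2]])
      (by rw [hDi, ksmul, Matrix.mul_smul, Matrix.smul_mul, habs2,
            show (Q i ⊗ₖ (1 : Mat b)) * (D * (Q i ⊗ₖ (1 : Mat b))) = D * (Q i ⊗ₖ (1 : Mat b)) by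
              rw [← Matrix.mul_assoc, ← hcm i, Matrix.mul_assoc, kmul, (hproj i).2]])
    rw [hcli, hDi, ksmul, Matrix.mul_smul, habs2]
  rw [Finset.sum_congr rfl fun i _ => by rw [hterm i]]
  rw [hρdef, ksum, Finset.mul_sum]
  refine Finset.sum_congr rfl fun i _ => ?_
  rw [ksmul, Matrix.mul_smul, smul_smul]

end back

section spec
variable {n : ℕ}

/-- the set of minimal representatives of positive eigenvalues -/
noncomputable def sSet (d : Fin n → ℝ) : Finset (Fin n) :=
  Finset.univ.filter (fun j => 0 < d j ∧ ∀ j', d j' = d j → j ≤ j')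

noncomputable def repIdx (d : Fin n → ℝ) (i : Fin n) : Fin n :=
  (Finset.univ.filter (fun j => d j = d i)).min' ⟨i, by simp⟩

lemma repIdx_eq (d : Fin n → ℝ) (i : Fin n) : d (repIdx d i) = d i := by
  have := (Finset.univ.filter (fun j => d j = d i)).min'_mem ⟨i, by simp⟩
  simpa [repIdx] using (Finset.mem_filter.mp this).2

lemma repIdx_le (d : Fin n → ℝ) (i j : Fin n) (h : d j = d i) : repIdx d i ≤ j :=
  Finset.min'_le _ j (by simp [h])

lemma repIdx_mem_sSet (d : Fin n → ℝ) (i : Fin n) (h : 0 < d i) : repIdx d i ∈ sSet d := by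
  rw [sSet, Finset.mem_filter]
  refine ⟨Finset.mem_univ _, by rw [repIdx_eq d i]; exact h, fun j' hj' => ?_⟩
  exact repIdx_le d i j' (by rw [hj', repIdx_eq d i])

lemma sSet_inj (d : Fin n → ℝ) {j j' : Fin n} (hj : j ∈ sSet d) (hj' : j' ∈ sSet d)
    (h : d j = d j') : j = j' := by
  rw [sSet, Finset.mem_filter] at hj hj'
  exact le_antisymm (hj.2.2 j' h.symm) (hj'.2.2 j h)

lemma sSet_filter_eq (d : Fin n → ℝ) (i : Fin n) (h : 0 < d i) :
    (sSet d).filter (fun j => d i = d j) = {repIdx d i} := by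
  ext j
  simp only [Finset.mem_filter, Finset.mem_singleton]
  constructor
  · rintro ⟨hjs, hdj⟩
    exact sSet_inj d hjs (repIdx_mem_sSet d i h) (by rw [← hdj, repIdx_eq d i])
  · rintro rfl
    exact ⟨repIdx_mem_sSet d i h, (repIdx_eq d i).symm⟩

lemma sSet_filter_empty (d : Fin n → ℝ) (i : Fin n) (h : ¬ 0 < d i) :
    (sSet d).filter (fun j => d i = d j) = ∅ := by
  ext j
  simp only [Finset.mem_filter, Finset.notMem_empty, iff_false, not_and]
  intro hjs hdj
  rw [sSet, Finset.mem_filter] at hjs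
  exact h (hdj ▸ hjs.2.1)

lemma sum_ind {M : Type*} [AddCommMonoid M] (d : Fin n → ℝ) (i : Fin n) (c : M) :
    (∑ j ∈ sSet d, if d i = d j then c else 0) = if 0 < d i then c else 0 := by
  rw [← Finset.sum_filter]
  by_cases h : 0 < d i
  · rw [sSet_filter_eq d i h, if_pos h, Finset.sum_singleton]
  · rw [sSet_filter_empty d i h, if_neg h, Finset.sum_empty]
end spec

section dg
variable {n : ℕ} {U : Mat n}

lemma Dg_mul (hU' : Uᴴ * U = 1) (g g' : Fin n → ℂ) :
    (U * Matrix.diagonal g * Uᴴ) * (U * Matrix.diagonal g' * Uᴴ) =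
      U * Matrix.diagonal (fun i => g i * g' i) * Uᴴ := by
  rw [show (U * Matrix.diagonal g * Uᴴ) * (U * Matrix.diagonal g' * Uᴴ) =
      U * (Matrix.diagonal g * (Uᴴ * U) * Matrix.diagonal g') * Uᴴ by
    simp only [Matrix.mul_assoc], hU', Matrix.mul_one, Matrix.diagonal_mul_diagonal]

lemma Dg_herm (g : Fin n → ℂ) (hg : ∀ i, star (g i) = g i) :
    (U * Matrix.diagonal g * Uᴴ).IsHermitian := by
  have : (Matrix.diagonal g)ᴴ = Matrix.diagonal g := by
    rw [Matrix.diagonal_conjTranspose, show star g = g from funext hg]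
  unfold Matrix.IsHermitian
  rw [Matrix.conjTranspose_mul, Matrix.conjTranspose_mul, Matrix.conjTranspose_conjTranspose,
    this, Matrix.mul_assoc]

lemma Dg_trace (hU' : Uᴴ * U = 1) (g : Fin n → ℂ) :
    (U * Matrix.diagonal g * Uᴴ).trace = ∑ i, g i := by
  rw [Matrix.trace_mul_cycle, hU', Matrix.one_mul, Matrix.trace_diagonal]

lemma diag_sum {ι : Type*} (s : Finset ι) (G : ι → Fin n → ℂ) :
    (∑ j ∈ s, Matrix.diagonal (G j)) = Matrix.diagonal (fun i => ∑ j ∈ s, G j i) := by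
  ext i i'
  by_cases h : i = i'
  · subst h; simp [Matrix.sum_apply]
  · simp [Matrix.sum_apply, Matrix.diagonal_apply_ne _ h]

lemma Dg_sum {ι : Type*} (s : Finset ι) (G : ι → Fin n → ℂ) :
    (∑ j ∈ s, U * Matrix.diagonal (G j) * Uᴴ) =
      U * Matrix.diagonal (fun i => ∑ j ∈ s, G j i) * Uᴴ := by
  rw [← diag_sum]
  rw [Finset.mul_sum, Finset.sum_mul]

lemma Dg_smul (c : ℂ) (g : Fin n → ℂ) :
    c • (U * Matrix.diagonal g * Uᴴ) = U * Matrix.diagonal (fun i => c * g i) * Uᴴ := by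
  rw [show Matrix.diagonal (fun i => c * g i) = c • Matrix.diagonal g by
    rw [← Matrix.diagonal_smul]; rfl]
  rw [Matrix.mul_smul, Matrix.smul_mul]

end dg

section fwd
variable {a b : ℕ}

lemma sum_equivFin {γ : Type*} [DecidableEq γ] {M : Type*} [AddCommMonoid M]
    (s : Finset γ) (f : γ → M) :
    ∑ i : Fin s.card, f ((s.equivFin.symm i : s) : γ) = ∑ j ∈ s, f j := by
  rw [← Finset.sum_coe_sort s f]
  exact Equiv.sum_comp s.equivFin.symm (fun (x : s) => f (x : γ))

lemma cc_j_to_cl (S : (Mat a → Mat b) → Mat a → Matrix (Fin a × Fin b) (Fin a × Fin b) ℂ)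
    (hCC : AxCC S) (hJ : AxJ S) : AxCL S := by
  intro P hP hPne E hE ρ hpsd hTr hPρP hcomm
  classical
  have hH : ρ.IsHermitian := hpsd.1
  set U : Mat a := (hH.eigenvectorUnitary : Mat a) with hUdef
  set d : Fin a → ℝ := hH.eigenvalues with hddef
  have hspec : ρ = U * Matrix.diagonal (fun i => (d i : ℂ)) * Uᴴ := by
    simpa [Matrix.star_eq_conjTranspose, Function.comp_def] using hH.spectral_theorem
  have hU1 : Uᴴ * U = 1 := by
    rw [← Matrix.star_eq_conjTranspose]
    exact Matrix.mem_unitaryGroup_iff'.mp hH.eigenvectorUnitary.2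
  have hU2 : U * Uᴴ = 1 := by
    rw [← Matrix.star_eq_conjTranspose]
    exact Matrix.mem_unitaryGroup_iff.mp hH.eigenvectorUnitary.2
  have hd0 : ∀ i, 0 ≤ d i := fun i => hpsd.eigenvalues_nonneg i
  have hPρ : P * ρ = ρ := by
    have h1 : P * (P * ρ * P) = P * ρ * P := by
      rw [show P * (P * ρ * P) = (P * P) * ρ * P by noncomm_ring, hP.2]
    rw [hPρP] at h1
    exact h1
  have hρP : ρ * P = ρ := by
    have h1 : (P * ρ * P) * P = P * ρ * P := by
      rw [show (P * ρ * P) * P = P * ρ * (P * P) by noncomm_ring, hP.2]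
    rw [hPρP] at h1
    exact h1
  set Qf : Fin a → Mat a :=
    fun j => U * Matrix.diagonal (fun i => if d i = d j then (1 : ℂ) else 0) * Uᴴ with hQfdef
  set D := chanState E with hDdef
  have hQmul : ∀ j, Qf j * Qf j = Qf j := by
    intro j
    rw [hQfdef]
    simp only
    rw [Dg_mul hU1,
      show (fun i => (if d i = d j then (1 : ℂ) else 0) * (if d i = d j then (1 : ℂ) else 0)) =
        (fun i => if d i = d j then (1 : ℂ) else 0) from funext fun i => by split <;> simp]
  have hQherm : ∀ j, (Qf j).IsHermitian := fun j => Dg_herm _ (fun i => by split <;> simp)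
  have hQorthd : ∀ j j', d j ≠ d j' → Qf j * Qf j' = 0 := by
    intro j j' hnd
    rw [hQfdef]
    simp only
    rw [Dg_mul hU1,
      show (fun i => (if d i = d j then (1 : ℂ) else 0) * (if d i = d j' then (1 : ℂ) else 0)) =
        (fun _ => (0 : ℂ)) from funext fun i => by
          split_ifs with h1 h2 <;> first | exact absurd (h1.symm.trans h2) hnd | simp]
    rw [Matrix.diagonal_zero, Matrix.mul_zero, Matrix.zero_mul]
  have hQρ : ∀ j, ρ * Qf j = (d j : ℂ) • Qf j := by
    intro j
    rw [hspec, hQfdef]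
    simp only
    rw [Dg_mul hU1, Dg_smul,
      show (fun i => (d i : ℂ) * (if d i = d j then (1 : ℂ) else 0)) =
        (fun i => (d j : ℂ) * (if d i = d j then (1 : ℂ) else 0)) from funext fun i => by
          split_ifs with h
          · rw [h]
          · simp]
  have hρQ : ∀ j, Qf j * ρ = (d j : ℂ) • Qf j := by
    intro j
    rw [hspec, hQfdef]
    simp only
    rw [Dg_mul hU1, Dg_smul,
      show (fun i => (if d i = d j then (1 : ℂ) else 0) * (d i : ℂ)) =
        (fun i => (d j : ℂ) * (if d i = d j then (1 : ℂ) else 0)) from funext fun i => by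
          split_ifs with h
          · rw [h, one_mul, mul_one]
          · simp]
  have hPQ : ∀ j, 0 < d j → P * Qf j = Qf j := by
    intro j hdj
    have h1 : P * (ρ * Qf j) = ρ * Qf j := by rw [← Matrix.mul_assoc, hPρ]
    rw [hQρ j, Matrix.mul_smul] at h1
    exact smul_right_injective (Mat a) (by exact_mod_cast hdj.ne' : (d j : ℂ) ≠ 0) h1
  have hQP : ∀ j, 0 < d j → Qf j * P = Qf j := by
    intro j hdj
    have h1 : (Qf j * ρ) * P = Qf j * ρ := by rw [Matrix.mul_assoc, hρP]
    rw [hρQ j, Matrix.smul_mul] at h1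
    exact smul_right_injective (Mat a) (by exact_mod_cast hdj.ne' : (d j : ℂ) ≠ 0) h1
  set m : Fin a → ℕ := fun j => (Finset.univ.filter (fun i => d i = d j)).card with hmdef
  have hQtr : ∀ j, (Qf j).trace = (m j : ℂ) := by
    intro j
    rw [hQfdef]
    simp only
    rw [Dg_trace hU1, Finset.sum_boole, hmdef]
  have hmpos : ∀ j, 0 < m j := fun j => Finset.card_pos.mpr ⟨j, by simp⟩
  have hQne : ∀ j, Qf j ≠ 0 := by
    intro j h0
    have h2 := hQtr j
    rw [h0, Matrix.trace_zero] at h2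
    exact (Nat.cast_ne_zero.mpr (hmpos j).ne' : (m j : ℂ) ≠ 0) h2.symm
  have hcm : ∀ g : Fin a → ℂ, (∀ i i', d i = d i' → g i = g i') →
      D * ((U * Matrix.diagonal g * Uᴴ) ⊗ₖ (1 : Mat b)) =
        ((U * Matrix.diagonal g * Uᴴ) ⊗ₖ (1 : Mat b)) * D := by
    intro g hg
    refine comm_transfer hU2 hU1 d g hg D ?_
    rw [← hspec]
    exact hcomm
  have hcmQ : ∀ j, D * (Qf j ⊗ₖ (1 : Mat b)) = (Qf j ⊗ₖ (1 : Mat b)) * D := by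
    intro j
    exact hcm _ (fun i i' h => by simp only [h])
  -- projector P and channel state
  have hD : D = (P ⊗ₖ (1 : Mat b)) * D * (P ⊗ₖ (1 : Mat b)) := by
    rw [hDdef, ← chanState_conj E hE.1 P]
    exact (chanState_congr hE.2.2.1).symm
  have hDP : D * (P ⊗ₖ (1 : Mat b)) = (P ⊗ₖ (1 : Mat b)) * D := by
    have h1 : D * (P ⊗ₖ (1 : Mat b)) = (P ⊗ₖ (1 : Mat b)) * D * (P ⊗ₖ (1 : Mat b)) := by
      conv_lhs => rw [hD]
      rw [Matrix.mul_assoc (P ⊗ₖ (1 : Mat b) * D), kmul, hP.2]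
    have h2 : (P ⊗ₖ (1 : Mat b)) * D = (P ⊗ₖ (1 : Mat b)) * D * (P ⊗ₖ (1 : Mat b)) := by
      conv_lhs => rw [hD]
      rw [← Matrix.mul_assoc, ← Matrix.mul_assoc, kmul, hP.2]
    exact h1.trans h2.symm
  -- R
  set R := U * Matrix.diagonal (fun i => if 0 < d i then (1 : ℂ) else 0) * Uᴴ with hRdef
  have hRsum : ∑ j ∈ sSet d, Qf j = R := by
    rw [hQfdef]
    simp only
    rw [Dg_sum, hRdef,
      show (fun i => ∑ j ∈ sSet d, if d i = d j then (1 : ℂ) else 0) =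
        (fun i => if 0 < d i then (1 : ℂ) else 0) from funext fun i => sum_ind d i 1]
  have hρsum : ∑ j ∈ sSet d, (d j : ℂ) • Qf j = ρ := by
    rw [hQfdef]
    simp only [Dg_smul]
    rw [Dg_sum]
    conv_rhs => rw [hspec]
    rw [show (fun i => ∑ j ∈ sSet d, (d j : ℂ) * if d i = d j then (1 : ℂ) else 0) =
        (fun i => (d i : ℂ)) from funext fun i =>
    calc (∑ j ∈ sSet d, (d j : ℂ) * if d i = d j then (1 : ℂ) else 0)
        = ∑ j ∈ sSet d, (if d i = d j then (d i : ℂ) else 0) := by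
          refine Finset.sum_congr rfl fun j _ => ?_
          split_ifs with h
          · rw [h, mul_one]
          · rw [mul_zero]
      _ = if 0 < d i then (d i : ℂ) else 0 := sum_ind d i _
      _ = (d i : ℂ) := by
          split_ifs with h
          · rfl
          · rw [show d i = 0 from le_antisymm (not_lt.mp h) (hd0 i)]
            norm_num]
  have htr1 : ∑ j ∈ sSet d, d j * (m j : ℝ) = 1 := by
    have h1 : (∑ i, (d i : ℂ)) = 1 := by
      rw [← Dg_trace (U := U) hU1 (fun i => (d i : ℂ)), ← hspec]
      exact hTr
    have h2 : (∑ i, d i) = 1 := by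
      have := h1
      rw [show (∑ i, (d i : ℂ)) = ((∑ i, d i : ℝ) : ℂ) by push_cast; rfl] at this
      exact_mod_cast this
    calc ∑ j ∈ sSet d, d j * (m j : ℝ)
        = ∑ j ∈ sSet d, ∑ i, (if d i = d j then d i else 0) := by
          refine Finset.sum_congr rfl fun j _ => ?_
          rw [show (∑ i, (if d i = d j then d i else 0)) =
              ∑ i, (d j * if d i = d j then (1 : ℝ) else 0) from Finset.sum_congr rfl fun i _ => by
                split_ifs with h
                · rw [h, mul_one]
                · rw [mul_zero]]
          rw [← Finset.mul_sum, Finset.sum_boole, hmdef]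
      _ = ∑ i, ∑ j ∈ sSet d, (if d i = d j then d i else 0) := Finset.sum_comm
      _ = ∑ i, (if 0 < d i then d i else 0) :=
          Finset.sum_congr rfl fun i _ => sum_ind d i (d i)
      _ = ∑ i, d i := by
          refine Finset.sum_congr rfl fun i _ => ?_
          split_ifs with h
          · rfl
          · rw [le_antisymm (not_lt.mp h) (hd0 i)]
      _ = 1 := h2
  -- facts about R and Q0
  have hsposd : ∀ j ∈ sSet d, 0 < d j := by
    intro j hj
    rw [sSet, Finset.mem_filter] at hj
    exact hj.2.1
  have hPR : P * R = R := by
    rw [← hRsum, Finset.mul_sum]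
    exact Finset.sum_congr rfl fun j hj => hPQ j (hsposd j hj)
  have hRP : R * P = R := by
    rw [← hRsum, Finset.sum_mul]
    exact Finset.sum_congr rfl fun j hj => hQP j (hsposd j hj)
  have hsd_ne : ∀ j ∈ sSet d, ∀ j' ∈ sSet d, j ≠ j' → d j ≠ d j' := by
    intro j hj j' hj' hne hd
    exact hne (sSet_inj d hj hj' hd)
  have hQR : ∀ j ∈ sSet d, Qf j * R = Qf j := by
    intro j hj
    rw [← hRsum, Finset.mul_sum]
    rw [Finset.sum_eq_single j (fun j' hj' hne => hQorthd j j' (hsd_ne j hj j' hj' (Ne.symm hne)))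
      (fun h => absurd hj h)]
    exact hQmul j
  have hRQ : ∀ j ∈ sSet d, R * Qf j = Qf j := by
    intro j hj
    rw [← hRsum, Finset.sum_mul]
    rw [Finset.sum_eq_single j (fun j' hj' hne => hQorthd j' j (hsd_ne j' hj' j hj hne))
      (fun h => absurd hj h)]
    exact hQmul j
  have hRmul : R * R = R := by
    rw [hRdef]
    rw [Dg_mul hU1,
      show (fun i => (if 0 < d i then (1 : ℂ) else 0) * (if 0 < d i then (1 : ℂ) else 0)) =
        (fun i => if 0 < d i then (1 : ℂ) else 0) from funext fun i => by split <;> simp]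
  have hRherm : R.IsHermitian := Dg_herm _ (fun i => by split <;> simp)
  have hcmR : D * (R ⊗ₖ (1 : Mat b)) = (R ⊗ₖ (1 : Mat b)) * D := hcm _ (fun i i' h => by
    simp only [h])
  set Q0 := P - R with hQ0def
  have hQ0herm : Q0.IsHermitian := hP.1.sub hRherm
  have hQ0mul : Q0 * Q0 = Q0 := by
    rw [hQ0def, Matrix.sub_mul, Matrix.mul_sub, Matrix.mul_sub, hP.2, hPR, hRP, hRmul]
    simp
  have hQQ0 : ∀ j ∈ sSet d, Qf j * Q0 = 0 := by
    intro j hj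
    rw [hQ0def, Matrix.mul_sub, hQP j (hsposd j hj), hQR j hj, sub_self]
  have hQ0Q : ∀ j ∈ sSet d, Q0 * Qf j = 0 := by
    intro j hj
    rw [hQ0def, Matrix.sub_mul, hPQ j (hsposd j hj), hRQ j hj, sub_self]
  have hcmQ0 : D * (Q0 ⊗ₖ (1 : Mat b)) = (Q0 ⊗ₖ (1 : Mat b)) * D := by
    rw [hQ0def, ksub, Matrix.mul_sub, Matrix.sub_mul, hDP, hcmR]
  have hPQ0 : P * Q0 = Q0 := by
    rw [hQ0def, Matrix.mul_sub, hP.2, hPR]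
  -- the base family over Fin (sSet d).card
  set s := sSet d with hsdef
  set k0 := s.card with hk0def
  set e := s.equivFin with hedef
  set Qb : Fin k0 → Mat a := fun i => Qf ((e.symm i : s) : Fin a) with hQbdef
  set lamb : Fin k0 → ℝ := fun i => d ((e.symm i : s) : Fin a) * (m ((e.symm i : s) : Fin a) : ℝ)
    with hlambdef
  have hmem : ∀ i : Fin k0, ((e.symm i : s) : Fin a) ∈ s := fun i => (e.symm i).2
  have heinj : ∀ i i' : Fin k0, i ≠ i' → ((e.symm i : s) : Fin a) ≠ ((e.symm i' : s) : Fin a) := by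
    intro i i' hne heq
    exact hne (e.symm.injective (Subtype.ext heq))
  have hQbproj : ∀ i, IsOrthProj (Qb i) := fun i => ⟨hQherm _, hQmul _⟩
  have hQborth : ∀ i i', i ≠ i' → Qb i * Qb i' = 0 := by
    intro i i' hne
    exact hQorthd _ _ (hsd_ne _ (hmem i) _ (hmem i') (heinj i i' hne))
  have hQbne : ∀ i, Qb i ≠ 0 := fun i => hQne _
  have hQbsum : ∑ i, Qb i = R := by
    rw [hQbdef]
    rw [sum_equivFin s Qf]
    exact hRsum
  have hcmQb : ∀ i, D * (Qb i ⊗ₖ (1 : Mat b)) = (Qb i ⊗ₖ (1 : Mat b)) * D := fun i => hcmQ _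
  have hlambnn : ∀ i, 0 ≤ lamb i := fun i =>
    mul_nonneg (hd0 _) (Nat.cast_nonneg _)
  have hlambsum : ∑ i, lamb i = 1 := by
    rw [hlambdef, sum_equivFin s (fun j => d j * (m j : ℝ))]
    exact htr1
  have hcoefb : ∀ i : Fin k0,
      ((lamb i : ℂ) * (Matrix.trace (Qb i))⁻¹) = (d ((e.symm i : s) : Fin a) : ℂ) := by
    intro i
    rw [hQbdef, hlambdef]
    simp only
    rw [hQtr]
    have hm : ((m ((e.symm i : s) : Fin a) : ℂ)) ≠ 0 :=
      Nat.cast_ne_zero.mpr (hmpos _).ne'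
    push_cast
    rw [mul_assoc, mul_inv_cancel₀ hm, mul_one]
  have hρb : ∑ i : Fin k0, ((lamb i : ℂ) * (Matrix.trace (Qb i))⁻¹) • Qb i =
      ∑ j ∈ s, (d j : ℂ) • Qf j := by
    rw [Finset.sum_congr rfl (fun i _ => by rw [hcoefb i])]
    exact sum_equivFin s (fun j => (d j : ℂ) • Qf j)
  by_cases hz : Q0 = 0
  · -- no kernel part: R = P
    have hRp : R = P := by
      have := sub_eq_zero.mp hz
      exact this.symm
    have hmain := main_lemma S hCC hJ P hP E hE k0 Qb hQbproj hQborth hQbne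
      (by rw [hQbsum, hRp]) hcmQb lamb hlambnn hlambsum
    rw [hρb, hρsum] at hmain
    exact hmain
  · -- kernel part Q0 ≠ 0
    set Qs : Fin (k0 + 1) → Mat a := Fin.snoc Qb Q0 with hQsdef
    set lams : Fin (k0 + 1) → ℝ := Fin.snoc lamb 0 with hlamsdef
    have hQsproj : ∀ i, IsOrthProj (Qs i) := by
      intro i
      refine Fin.lastCases ?_ ?_ i
      · rw [hQsdef]; simp only [Fin.snoc_last]
        exact ⟨hQ0herm, hQ0mul⟩
      · intro i
        rw [hQsdef]; simp only [Fin.snoc_castSucc]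
        exact hQbproj i
    have hQsorth : ∀ i j, i ≠ j → Qs i * Qs j = 0 := by
      intro i j hne
      rcases Fin.eq_castSucc_or_eq_last i with ⟨i', rfl⟩ | rfl <;>
        rcases Fin.eq_castSucc_or_eq_last j with ⟨j', rfl⟩ | rfl
      · rw [hQsdef]; simp only [Fin.snoc_castSucc]
        exact hQborth i' j' (fun h => hne (by rw [h]))
      · rw [hQsdef]; simp only [Fin.snoc_castSucc, Fin.snoc_last]
        exact hQQ0 _ (hmem i')
      · rw [hQsdef]; simp only [Fin.snoc_castSucc, Fin.snoc_last]
        exact hQ0Q _ (hmem j')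
      · exact absurd rfl hne
    have hQsne : ∀ i, Qs i ≠ 0 := by
      intro i
      rcases Fin.eq_castSucc_or_eq_last i with ⟨i', rfl⟩ | rfl
      · rw [hQsdef]; simp only [Fin.snoc_castSucc]; exact hQbne i'
      · rw [hQsdef]; simp only [Fin.snoc_last]; exact hz
    have hQssum : ∑ i, Qs i = P := by
      rw [Fin.sum_univ_castSucc]
      rw [hQsdef]
      simp only [Fin.snoc_castSucc, Fin.snoc_last]
      rw [hQbsum]
      rw [hQ0def]
      abel
    have hcmQs : ∀ i, D * (Qs i ⊗ₖ (1 : Mat b)) = (Qs i ⊗ₖ (1 : Mat b)) * D := by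
      intro i
      rcases Fin.eq_castSucc_or_eq_last i with ⟨i', rfl⟩ | rfl
      · rw [hQsdef]; simp only [Fin.snoc_castSucc]; exact hcmQb i'
      · rw [hQsdef]; simp only [Fin.snoc_last]; exact hcmQ0
    have hlamsnn : ∀ i, 0 ≤ lams i := by
      intro i
      rcases Fin.eq_castSucc_or_eq_last i with ⟨i', rfl⟩ | rfl
      · rw [hlamsdef]; simp only [Fin.snoc_castSucc]; exact hlambnn i'
      · rw [hlamsdef]; simp only [Fin.snoc_last]; exact le_refl 0
    have hlamssum : ∑ i, lams i = 1 := by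
      rw [Fin.sum_univ_castSucc, hlamsdef]
      simp only [Fin.snoc_castSucc, Fin.snoc_last]
      rw [add_zero]
      exact hlambsum
    have hmain := main_lemma S hCC hJ P hP E hE (k0 + 1) Qs hQsproj hQsorth hQsne
      hQssum hcmQs lams hlamsnn hlamssum
    have hρs : ∑ i : Fin (k0 + 1), ((lams i : ℂ) * (Matrix.trace (Qs i))⁻¹) • Qs i = ρ := by
      rw [Fin.sum_univ_castSucc, hQsdef, hlamsdef]
      simp only [Fin.snoc_castSucc, Fin.snoc_last, Complex.ofReal_zero, zero_mul, zero_smul,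
        add_zero]
      rw [hρb, hρsum]
    rw [hρs] at hmain
    exact hmain

end fwd

/-- axioms (CC) and (J) together are equivalent to the classical
limit axiom (CL). -/
theorem stmt_14 (a b : ℕ) (ha : 1 ≤ a) (hb : 1 ≤ b)
    (S : (Mat a → Mat b) → Mat a → Matrix (Fin a × Fin b) (Fin a × Fin b) ℂ) :
    (AxCC S ∧ AxJ S) ↔ AxCL S := by
  constructor
  · rintro ⟨hCC, hJ⟩
    exact cc_j_to_cl S hCC hJ
  · intro hCL
    exact ⟨cl_to_cc S hCL, cl_to_j S hCL⟩
end

section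
/- Let n ≥ 1 and let Θ : M_n × M_n → M_n be bilinear, written (ρ, M) ↦ Θ_ρ(M). Assume: (a) Θ_ρ(1) = ρ for all ρ ∈ M_n; (b) Θ_P(Q) = 0 whenever P, Q are orthogonal projections with PQ = 0. Then Θ_1(M) = M for all M, and for every Hermitian ρ ∈ M_n and every M ∈ M_n with ρM = Mρ one has Θ_ρ(M) = ρM. -/
open Matrix Kronecker BigOperators ComplexOrder

/-! ### Auxiliary spectral lemmas -/

/-- The eigenprojection of a Hermitian matrix onto the eigenvalue `t`. -/
noncomputable def eigProj {n : ℕ} {A : Mat n} (hA : A.IsHermitian) (t : ℝ) : Mat n :=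
  (hA.eigenvectorUnitary : Mat n) *
    Matrix.diagonal (fun i => if hA.eigenvalues i = t then (1:ℂ) else 0) *
    (star (hA.eigenvectorUnitary : Mat n))

lemma eigProj_proj {n : ℕ} {A : Mat n} (hA : A.IsHermitian) (t : ℝ) :
    IsOrthProj (eigProj hA t) := by
  set U : Mat n := (hA.eigenvectorUnitary : Mat n) with hU
  set Dt : Mat n := Matrix.diagonal (fun i => if hA.eigenvalues i = t then (1:ℂ) else 0)
    with hDt
  have h1 : star U * U = 1 := mem_unitaryGroup_iff'.mp hA.eigenvectorUnitary.2
  have hDh : Dtᴴ = Dt := by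
    ext i j
    rw [hDt, conjTranspose_apply]
    by_cases h : i = j
    · subst h
      simp only [Matrix.diagonal_apply_eq]
      by_cases ht : hA.eigenvalues i = t <;> simp [ht]
    · rw [Matrix.diagonal_apply_ne _ (fun hji => h hji.symm),
        Matrix.diagonal_apply_ne _ h, star_zero]
  have hDD : Dt * Dt = Dt := by
    rw [hDt, diagonal_mul_diagonal]
    ext i j
    by_cases h : i = j
    · subst h
      simp only [Matrix.diagonal_apply_eq]
      by_cases ht : hA.eigenvalues i = t <;> simp [ht]
    · simp only [Matrix.diagonal_apply_ne _ h]
  have heig : eigProj hA t = U * Dt * star U := rfl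
  constructor
  · show _ᴴ = _
    rw [heig]
    simp only [star_eq_conjTranspose, conjTranspose_mul, conjTranspose_conjTranspose,
      hDh, mul_assoc]
  · rw [heig]
    have step : U * Dt * star U * (U * Dt * star U) = U * Dt * (star U * U) * Dt * star U := by
      noncomm_ring
    rw [step, h1, mul_one, mul_assoc U Dt Dt, hDD]

lemma eigProj_sum {n : ℕ} {A : Mat n} (hA : A.IsHermitian) :
    ∑ t ∈ Finset.image hA.eigenvalues Finset.univ, (t : ℂ) • eigProj hA t = A := by
  set U : Mat n := (hA.eigenvectorUnitary : Mat n) with hU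
  have keyfun : ∀ i, ∑ t ∈ Finset.image hA.eigenvalues Finset.univ,
      (t : ℂ) * (if hA.eigenvalues i = t then (1:ℂ) else 0) = (hA.eigenvalues i : ℂ) := by
    intro i
    rw [Finset.sum_eq_single (hA.eigenvalues i)]
    · simp
    · intro b _ hb
      rw [if_neg (fun h => hb h.symm), mul_zero]
    · intro h
      exact absurd (Finset.mem_image_of_mem _ (Finset.mem_univ i)) h
  have key : ∑ t ∈ Finset.image hA.eigenvalues Finset.univ,
      (t : ℂ) • Matrix.diagonal (fun i => if hA.eigenvalues i = t then (1:ℂ) else 0)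
      = Matrix.diagonal (RCLike.ofReal ∘ hA.eigenvalues) := by
    ext i j
    by_cases h : i = j
    · subst h
      simp only [Matrix.sum_apply, Matrix.smul_apply, Matrix.diagonal_apply_eq,
        smul_eq_mul, Function.comp_apply]
      exact keyfun i
    · simp only [Matrix.sum_apply, Matrix.smul_apply, Matrix.diagonal_apply_ne _ h,
        smul_eq_mul, mul_zero, Finset.sum_const_zero]
  calc ∑ t ∈ Finset.image hA.eigenvalues Finset.univ, (t : ℂ) • eigProj hA t
      = U * (∑ t ∈ Finset.image hA.eigenvalues Finset.univ,
          (t : ℂ) • Matrix.diagonal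
            (fun i => if hA.eigenvalues i = t then (1:ℂ) else 0)) * star U := by
        rw [Finset.mul_sum, Finset.sum_mul]
        refine Finset.sum_congr rfl fun t _ => ?_
        simp [eigProj, Matrix.mul_smul, Matrix.smul_mul]
        rfl
    _ = A := by rw [key]; exact hA.spectral_theorem.symm

lemma eigProj_comm {n : ℕ} {A : Mat n} (hA : A.IsHermitian) (t : ℝ) {B : Mat n}
    (hB : B * A = A * B) : B * eigProj hA t = eigProj hA t * B := by
  set U : Mat n := (hA.eigenvectorUnitary : Mat n) with hU
  set D : Mat n := Matrix.diagonal (RCLike.ofReal ∘ hA.eigenvalues) with hD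
  have h1 : star U * U = 1 := mem_unitaryGroup_iff'.mp hA.eigenvectorUnitary.2
  have h2 : U * star U = 1 := mem_unitaryGroup_iff.mp hA.eigenvectorUnitary.2
  have hA' : A = U * D * star U := hA.spectral_theorem
  set N : Mat n := star U * B * U with hN
  have hBU : B * U = U * N := by rw [hN, ← mul_assoc, ← mul_assoc, h2, one_mul]
  have hNsU : N * star U = star U * B := by rw [hN, mul_assoc, mul_assoc, h2, mul_one]
  have hAU : A * U = U * D := by rw [hA', mul_assoc, h1, mul_one]
  have hsUA : star U * A = D * star U := by
    rw [hA', ← mul_assoc, ← mul_assoc, h1, one_mul]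
  have hcomm : N * D = D * N := by
    calc N * D = star U * B * (U * D) := by rw [hN]; simp only [mul_assoc]
      _ = star U * B * (A * U) := by rw [hAU]
      _ = star U * (B * A) * U := by simp only [mul_assoc]
      _ = star U * (A * B) * U := by rw [hB]
      _ = star U * A * (B * U) := by simp only [mul_assoc]
      _ = D * (star U * (B * U)) := by rw [hsUA]; simp only [mul_assoc]
      _ = D * N := by rw [hN]; simp only [mul_assoc]
  have hzero : ∀ i j, hA.eigenvalues i ≠ hA.eigenvalues j → N i j = 0 := by
    intro i j hij
    by_contra hN0
    have h := congrFun (congrFun hcomm i) j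
    rw [hD, Matrix.mul_diagonal, Matrix.diagonal_mul] at h
    simp only [Function.comp_apply] at h
    rw [mul_comm (N i j)] at h
    have heq := mul_right_cancel₀ hN0 h
    exact hij ((RCLike.ofReal_inj.mp heq).symm)
  set Dt : Mat n := Matrix.diagonal (fun i => if hA.eigenvalues i = t then (1:ℂ) else 0)
    with hDt
  have hcommt : N * Dt = Dt * N := by
    ext i j
    rw [hDt, Matrix.mul_diagonal, Matrix.diagonal_mul]
    by_cases hi : hA.eigenvalues i = t <;> by_cases hj : hA.eigenvalues j = t
    · simp [hi, hj]
    · have : N i j = 0 := hzero i j (by rw [hi]; exact fun h => hj h.symm)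
      simp [hi, hj, this]
    · have : N i j = 0 := hzero i j (by rw [hj]; exact hi)
      simp [hi, hj, this]
    · simp [hi, hj]
  have heig : eigProj hA t = U * Dt * star U := rfl
  calc B * eigProj hA t = B * U * Dt * star U := by rw [heig]; simp only [mul_assoc]
    _ = U * (N * Dt) * star U := by rw [hBU]; simp only [mul_assoc]
    _ = U * Dt * (N * star U) := by rw [hcommt]; simp only [mul_assoc]
    _ = eigProj hA t * B := by rw [hNsU, heig]; simp only [mul_assoc]

/-- if `Θ` is bilinear with `Θ_ρ(1) = ρ` and `Θ_P(Q) = 0` for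
mutually orthogonal orthogonal projections, then `Θ_1 = id` and `Θ_ρ(M) = ρM`
for Hermitian `ρ` commuting with `M`. -/
theorem stmt_15 (n : ℕ) (hn : 1 ≤ n) (Θ : Mat n → Mat n → Mat n)
    (hlin_rho : ∀ M : Mat n, IsLinearMap ℂ fun ρ => Θ ρ M)
    (hlin_M : ∀ ρ : Mat n, IsLinearMap ℂ fun M => Θ ρ M)
    (hone : ∀ ρ : Mat n, Θ ρ 1 = ρ)
    (horth : ∀ P Q : Mat n, IsOrthProj P → IsOrthProj Q → P * Q = 0 → Θ P Q = 0) :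
    (∀ M : Mat n, Θ 1 M = M) ∧
      ∀ ρ M : Mat n, ρ.IsHermitian → ρ * M = M * ρ → Θ ρ M = ρ * M := by
  -- complement of an orthogonal projection
  have hcompl : ∀ P : Mat n, IsOrthProj P → IsOrthProj (1 - P) := by
    intro P ⟨hP1, hP2⟩
    constructor
    · show _ᴴ = _; rw [conjTranspose_sub, conjTranspose_one, hP1]
    · rw [mul_sub, sub_mul, sub_mul, mul_one, one_mul, mul_one, hP2]; abel
  -- Key lemma B : commuting orthogonal projections
  have keyB : ∀ P Q : Mat n, IsOrthProj P → IsOrthProj Q → P * Q = Q * P →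
      Θ P Q = P * Q := by
    intro P Q hP hQ hcomm
    set R : Mat n := Q * P with hR
    have hRproj : IsOrthProj R := by
      constructor
      · show _ᴴ = _; rw [conjTranspose_mul, hP.1, hQ.1, hcomm]
      · calc R * R = Q * (P * Q) * P := by rw [hR]; noncomm_ring
          _ = (Q * Q) * (P * P) := by rw [hcomm, hR]; noncomm_ring
          _ = R := by rw [hP.2, hQ.2]
    have hPR : P * R = R := by
      calc P * R = (P * Q) * P := by rw [hR, ← mul_assoc]
        _ = Q * (P * P) := by rw [hcomm, hR, mul_assoc]
        _ = R := by rw [hP.2]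
    have hRP : R * P = R := by rw [hR, mul_assoc, hP.2]
    -- Q = R + Q*(1-P), and Θ P (Q*(1-P)) = 0
    have hQ1P : IsOrthProj (Q * (1 - P)) := by
      have hcomm' : Q * (1 - P) = (1 - P) * Q := by
        rw [mul_sub, sub_mul, mul_one, one_mul, hcomm, hR]
      constructor
      · show _ᴴ = _
        rw [conjTranspose_mul, hQ.1, conjTranspose_sub, conjTranspose_one, hP.1, ← hcomm']
      · calc Q * (1 - P) * (Q * (1 - P)) = Q * ((1 - P) * Q) * (1 - P) := by noncomm_ring
          _ = (Q * Q) * ((1 - P) * (1 - P)) := by rw [← hcomm']; noncomm_ring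
          _ = Q * (1 - P) := by
              rw [hQ.2, (hcompl P hP).2]
    have hPQ1P : P * (Q * (1 - P)) = 0 := by
      calc P * (Q * (1 - P)) = (P * Q) * (1 - P) := by rw [mul_assoc]
        _ = Q * (P * (1 - P)) := by rw [hcomm, hR, mul_assoc]
        _ = 0 := by rw [mul_sub, mul_one, hP.2, sub_self, mul_zero]
    have step1 : Θ P Q = Θ P R := by
      have hsplit : Q = R + Q * (1 - P) := by rw [hR, mul_sub, mul_one]; abel
      rw [hsplit, (hlin_M P).map_add, horth P _ hP hQ1P hPQ1P, add_zero]
    -- S = P - R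
    set S : Mat n := P - R with hS
    have hSproj : IsOrthProj S := by
      constructor
      · show _ᴴ = _; rw [conjTranspose_sub, hP.1, hRproj.1]
      · calc S * S = P * P - P * R - R * P + R * R := by rw [hS]; noncomm_ring
          _ = S := by rw [hP.2, hPR, hRP, hRproj.2, hS]; abel
    have hSR : S * R = 0 := by rw [hS, sub_mul, hPR, hRproj.2, sub_self]
    have hRR : Θ R R = R := by
      have h1R : R * (1 - R) = 0 := by
        rw [mul_sub, mul_one, hRproj.2, sub_self]
      have := horth R (1 - R) hRproj (hcompl R hRproj) h1R
      have h2 := (hlin_M R).map_add (1 - R) R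
      rw [sub_add_cancel, hone, this, zero_add] at h2
      exact h2.symm
    have step2 : Θ P R = R := by
      have h3 := (hlin_rho R).map_add R S
      rw [show R + S = P by rw [hS]; abel, hRR, horth S R hSproj hRproj hSR,
        add_zero] at h3
      exact h3
    rw [step1, step2, hcomm]
  -- Key lemma H : orthogonal projection vs commuting Hermitian matrix
  have keyH : ∀ P M : Mat n, IsOrthProj P → M.IsHermitian → P * M = M * P →
      Θ P M = P * M := by
    intro P M hP hM hcomm
    have hdec := eigProj_sum hM
    have hPQ : ∀ t : ℝ, P * eigProj hM t = eigProj hM t * P :=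
      fun t => eigProj_comm hM t hcomm
    let L : Mat n →ₗ[ℂ] Mat n := IsLinearMap.mk' _ (hlin_M P)
    have hLM : Θ P M = L M := rfl
    rw [hLM]
    conv_lhs => rw [← hdec]
    rw [map_sum]
    have : ∀ t ∈ Finset.image hM.eigenvalues Finset.univ,
        L ((t : ℂ) • eigProj hM t) = (t : ℂ) • (P * eigProj hM t) := by
      intro t _
      rw [_root_.map_smul]
      congr 1
      exact keyB P (eigProj hM t) hP (eigProj_proj hM t) (hPQ t)
    rw [Finset.sum_congr rfl this]
    calc ∑ t ∈ Finset.image hM.eigenvalues Finset.univ, (t : ℂ) • (P * eigProj hM t)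
        = ∑ t ∈ Finset.image hM.eigenvalues Finset.univ,
            P * ((t : ℂ) • eigProj hM t) := by
          refine Finset.sum_congr rfl fun t _ => ?_
          rw [mul_smul_comm]
      _ = P * ∑ t ∈ Finset.image hM.eigenvalues Finset.univ,
            (t : ℂ) • eigProj hM t := (Finset.mul_sum _ _ _).symm
      _ = P * M := by rw [hdec]
  -- Key lemma A : orthogonal projection vs commuting arbitrary matrix
  have keyA : ∀ P M : Mat n, IsOrthProj P → P * M = M * P → Θ P M = P * M := by
    intro P M hP hcomm
    have hcommH : P * Mᴴ = Mᴴ * P := by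
      have := congrArg conjTranspose hcomm
      rw [conjTranspose_mul, conjTranspose_mul, hP.1] at this
      exact this.symm
    set H : Mat n := (1/2 : ℂ) • (M + Mᴴ) with hH
    set K : Mat n := (-(Complex.I)/2 : ℂ) • (M - Mᴴ) with hK
    have hHherm : H.IsHermitian := by
      show _ᴴ = _
      rw [hH, conjTranspose_smul, conjTranspose_add, conjTranspose_conjTranspose]
      rw [add_comm]
      congr 1
      norm_num
    have hKherm : K.IsHermitian := by
      show _ᴴ = _
      rw [hK, conjTranspose_smul, conjTranspose_sub, conjTranspose_conjTranspose]
      have h1 : star (-Complex.I/2 : ℂ) = Complex.I/2 := by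
        simp [Complex.star_def, map_div₀, Complex.conj_I]
      rw [h1, ← neg_sub M Mᴴ, smul_neg, ← neg_smul, neg_div]
    have hMsplit : M = H + Complex.I • K := by
      rw [hH, hK, smul_smul]
      have : Complex.I * (-Complex.I / 2) = 1/2 := by
        rw [← mul_div_assoc, mul_neg, Complex.I_mul_I, neg_neg]
      rw [this]
      have h4 : (1/2 : ℂ) • (M + Mᴴ) + (1/2 : ℂ) • (M - Mᴴ) = ((1/2 : ℂ) + (1/2 : ℂ)) • M := by
        rw [smul_add, smul_sub, add_smul]
        abel
      rw [h4]
      norm_num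
    have hHP : P * H = H * P := by
      rw [hH, Matrix.mul_smul, Matrix.smul_mul, mul_add, add_mul, hcomm, hcommH]
    have hKP : P * K = K * P := by
      rw [hK, Matrix.mul_smul, Matrix.smul_mul, mul_sub, sub_mul, hcomm, hcommH]
    calc Θ P M = Θ P (H + Complex.I • K) := by rw [← hMsplit]
      _ = Θ P H + Complex.I • Θ P K := by
          rw [(hlin_M P).map_add, (hlin_M P).map_smul Complex.I K]
      _ = P * H + Complex.I • (P * K) := by
          rw [keyH P H hP hHherm hHP, keyH P K hP hKherm hKP]
      _ = P * (H + Complex.I • K) := by rw [mul_add, mul_smul_comm Complex.I P K]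
      _ = P * M := by rw [← hMsplit]
  have hone_proj : IsOrthProj (1 : Mat n) := ⟨isHermitian_one, one_mul 1⟩
  constructor
  · intro M
    rw [keyA 1 M hone_proj (by rw [one_mul, mul_one]), one_mul]
  · intro ρ M hρ hcomm
    have hdec := eigProj_sum hρ
    let L : Mat n →ₗ[ℂ] Mat n := IsLinearMap.mk' _ (hlin_rho M)
    have hLM : Θ ρ M = L ρ := rfl
    rw [hLM]
    conv_lhs => rw [← hdec]
    rw [map_sum]
    have : ∀ t ∈ Finset.image hρ.eigenvalues Finset.univ,
        L ((t : ℂ) • eigProj hρ t) = (t : ℂ) • (eigProj hρ t * M) := by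
      intro t _
      rw [_root_.map_smul]
      congr 1
      refine keyA (eigProj hρ t) M (eigProj_proj hρ t) ?_
      exact (eigProj_comm hρ t (by rw [hcomm])).symm
    rw [Finset.sum_congr rfl this]
    calc ∑ t ∈ Finset.image hρ.eigenvalues Finset.univ, (t : ℂ) • (eigProj hρ t * M)
        = ∑ t ∈ Finset.image hρ.eigenvalues Finset.univ,
            ((t : ℂ) • eigProj hρ t) * M := by
          refine Finset.sum_congr rfl fun t _ => ?_
          rw [Matrix.smul_mul]
      _ = (∑ t ∈ Finset.image hρ.eigenvalues Finset.univ,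
            (t : ℂ) • eigProj hρ t) * M := (Finset.sum_mul _ _ _).symm
      _ = ρ * M := by rw [hdec]
end

section
/- Let n ≥ 1 and let Θ : M_n × M_n → M_n be bilinear, written (ρ, M) ↦ Θ_ρ(M). Assume: (a) Θ_1(M) = M for all M ∈ M_n; (b) for every orthogonal projection P and every M ∈ M_n, Θ_P(PMP) = PMP. Then for all orthogonal projections P, Q with PQ = 0 and every M ∈ M_n one has Θ_P(QMQ) = 0. -/
open Matrix Kronecker BigOperators ComplexOrder

/-- if `Θ` is bilinear with `Θ_1 = id` and `Θ_P(PMP) = PMP` for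
every orthogonal projection `P`, then `Θ_P(QMQ) = 0` whenever `P, Q` are
orthogonal projections with `PQ = 0`. -/
theorem stmt_16 (n : ℕ) (hn : 1 ≤ n) (Θ : Mat n → Mat n → Mat n)
    (hlin_rho : ∀ M : Mat n, IsLinearMap ℂ fun ρ => Θ ρ M)
    (hlin_M : ∀ ρ : Mat n, IsLinearMap ℂ fun M => Θ ρ M)
    (hid : ∀ M : Mat n, Θ 1 M = M)
    (hJ : ∀ P : Mat n, IsOrthProj P → ∀ M : Mat n, Θ P (P * M * P) = P * M * P) :
    ∀ P Q : Mat n, IsOrthProj P → IsOrthProj Q → P * Q = 0 →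
      ∀ M : Mat n, Θ P (Q * M * Q) = 0 := by
  intro P Q hP hQ hPQ M
  have hQP : Q * P = 0 := by
    have := congrArg Matrix.conjTranspose hPQ
    simpa [Matrix.conjTranspose_mul, hP.1.eq, hQ.1.eq] using this
  have hPQproj : IsOrthProj (P + Q) := by
    constructor
    · exact hP.1.add hQ.1
    · simp only [add_mul, mul_add, hP.2, hQ.2, hPQ, hQP]
      abel
  have h1 : Θ (P + Q) (Q * M * Q) = Q * M * Q := by
    have := hJ (P + Q) hPQproj (Q * M * Q)
    have key : (P + Q) * (Q * M * Q) * (P + Q) = Q * M * Q := by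
      have h1 : (P + Q) * (Q * M * Q) = Q * M * Q := by
        rw [add_mul]
        have : P * (Q * M * Q) = 0 := by rw [← mul_assoc, ← mul_assoc, hPQ]; simp
        rw [this, ← mul_assoc, ← mul_assoc, hQ.2]; simp
      have h2 : (Q * M * Q) * (P + Q) = Q * M * Q := by
        rw [mul_add, mul_assoc, hQP, mul_assoc (Q * M) Q Q, hQ.2]; simp
      rw [h1, h2]
    rwa [key] at this
  have h2 : Θ Q (Q * M * Q) = Q * M * Q := by
    have := hJ Q hQ M
    calc Θ Q (Q * M * Q) = Θ Q (Q * (Q * M * Q) * Q) := by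
          rw [show Q * (Q * M * Q) * Q = Q * M * Q by
            rw [← mul_assoc, ← mul_assoc, hQ.2, mul_assoc, hQ.2]]
        _ = Q * (Q * M * Q) * Q := hJ Q hQ _
        _ = Q * M * Q := by
            rw [← mul_assoc, ← mul_assoc, hQ.2, mul_assoc, hQ.2]
  have hadd : Θ (P + Q) (Q * M * Q) = Θ P (Q * M * Q) + Θ Q (Q * M * Q) :=
    (hlin_rho (Q * M * Q)).map_add P Q
  rw [h1, h2] at hadd
  exact (right_eq_add.mp hadd)
end

section
/- Let n ≥ 1 and let Φ : M_n → M_n ⊗ M_n be a linear map. Then the following are equivalent: (A) for all ρ ∈ M_n, the partial trace of Φ(ρ) over the second factor equals ρ, the partial trace of Φ(ρ) over the first factor equals ρ, Φ(1) = F, and F·Φ(ρ)·F = Φ(ρ); (B) there exists a linear map Ξ : M_n → M_n ⊗ M_n with Ξ(1) = 0, F·Ξ(ρ)·F = Ξ(ρ) for all ρ, and both partial traces of Ξ(ρ) equal to 0 for all ρ, such that Φ(ρ) = (1/n)(Tr(ρ)·F + 1 ⊗ ρ̂ + ρ̂ ⊗ 1) + Ξ(ρ) for all ρ, where ρ̂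 := ρ − (Tr(ρ)/n)·1. -/
open Matrix Kronecker BigOperators ComplexOrder

section Aux

variable {n : ℕ}

lemma swap_mul_apply (M : Matrix (Fin n × Fin n) (Fin n × Fin n) ℂ)
    (p q : Fin n × Fin n) : (swapOp n * M) p q = M (p.2, p.1) q := by
  rw [Matrix.mul_apply, Finset.sum_eq_single (p.2, p.1)]
  · simp [swapOp]
  · rintro ⟨b1, b2⟩ _ hb
    simp only [swapOp, Matrix.of_apply]
    rw [if_neg, zero_mul]
    rintro ⟨h1, h2⟩
    exact hb (by rw [← h2, ← h1])
  · intro h; exact absurd (Finset.mem_univ _) h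

lemma mul_swap_apply (M : Matrix (Fin n × Fin n) (Fin n × Fin n) ℂ)
    (p q : Fin n × Fin n) : (M * swapOp n) p q = M p (q.2, q.1) := by
  rw [Matrix.mul_apply, Finset.sum_eq_single (q.2, q.1)]
  · simp [swapOp]
  · rintro ⟨b1, b2⟩ _ hb
    simp only [swapOp, Matrix.of_apply]
    rw [if_neg, mul_zero]
    rintro ⟨h1, h2⟩
    exact hb (by rw [h1, h2])
  · intro h; exact absurd (Finset.mem_univ _) h

lemma swap_mul_swap : swapOp n * swapOp n = 1 := by
  ext ⟨i, j⟩ ⟨k, l⟩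
  rw [swap_mul_apply]
  simp [swapOp, Matrix.one_apply, Prod.ext_iff, and_comm]

lemma swap_conj_kron (a b : Mat n) :
    swapOp n * (a ⊗ₖ b) * swapOp n = b ⊗ₖ a := by
  ext ⟨i, j⟩ ⟨k, l⟩
  rw [mul_swap_apply, swap_mul_apply]
  simp [Matrix.kroneckerMap_apply, mul_comm]

lemma ptraceR_add {α β : Type} [Fintype β] (X Y : Matrix (α × β) (α × β) ℂ) :
    ptraceR (X + Y) = ptraceR X + ptraceR Y := by
  ext i k; simp [ptraceR, Finset.sum_add_distrib]

lemma ptraceR_sub {α β : Type} [Fintype β] (X Y : Matrix (α × β) (α × β) ℂ) :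
    ptraceR (X - Y) = ptraceR X - ptraceR Y := by
  ext i k; simp [ptraceR, Finset.sum_sub_distrib]

lemma ptraceR_smul {α β : Type} [Fintype β] (c : ℂ) (X : Matrix (α × β) (α × β) ℂ) :
    ptraceR (c • X) = c • ptraceR X := by
  ext i k; simp [ptraceR, Finset.mul_sum]

lemma ptraceL_add {α β : Type} [Fintype α] (X Y : Matrix (α × β) (α × β) ℂ) :
    ptraceL (X + Y) = ptraceL X + ptraceL Y := by
  ext i k; simp [ptraceL, Finset.sum_add_distrib]

lemma ptraceL_sub {α β : Type} [Fintype α] (X Y : Matrix (α × β) (α × β) ℂ) :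
    ptraceL (X - Y) = ptraceL X - ptraceL Y := by
  ext i k; simp [ptraceL, Finset.sum_sub_distrib]

lemma ptraceL_smul {α β : Type} [Fintype α] (c : ℂ) (X : Matrix (α × β) (α × β) ℂ) :
    ptraceL (c • X) = c • ptraceL X := by
  ext i k; simp [ptraceL, Finset.mul_sum]

lemma ptraceR_kron (a b : Mat n) : ptraceR (a ⊗ₖ b) = b.trace • a := by
  ext i k
  simp [ptraceR, Matrix.trace, Matrix.diag, Finset.sum_mul, mul_comm, ← Finset.mul_sum]

lemma ptraceL_kron (a b : Mat n) : ptraceL (a ⊗ₖ b) = a.trace • b := by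
  ext j l
  simp only [ptraceL, Matrix.of_apply, Matrix.kroneckerMap_apply, Matrix.smul_apply,
    Matrix.trace, Matrix.diag_apply, smul_eq_mul]
  rw [← Finset.sum_mul]

lemma ptraceR_swap : ptraceR (swapOp n) = (1 : Mat n) := by
  ext i k
  simp only [ptraceR, swapOp, Matrix.of_apply, Matrix.one_apply]
  rw [Finset.sum_eq_single i]
  · simp
  · intro b _ hb; rw [if_neg]; rintro ⟨h1, _⟩; exact hb h1.symm
  · intro h; exact absurd (Finset.mem_univ _) h

lemma ptraceL_swap : ptraceL (swapOp n) = (1 : Mat n) := by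
  ext i k
  simp only [ptraceL, swapOp, Matrix.of_apply, Matrix.one_apply]
  rw [Finset.sum_eq_single k]
  · simp
  · intro b _ hb; rw [if_neg]; rintro ⟨h1, _⟩; exact hb h1
  · intro h; exact absurd (Finset.mem_univ _) h

/-- The canonical part of the decomposition. -/
noncomputable def Gfun (n : ℕ) (ρ : Mat n) : Matrix (Fin n × Fin n) (Fin n × Fin n) ℂ :=
  ((n : ℂ))⁻¹ • (Matrix.trace ρ • swapOp n +
      (1 : Mat n) ⊗ₖ (ρ - (Matrix.trace ρ / (n : ℂ)) • 1) +
      (ρ - (Matrix.trace ρ / (n : ℂ)) • 1) ⊗ₖ (1 : Mat n))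

lemma trace_hat (hn : (n : ℂ) ≠ 0) (ρ : Mat n) :
    Matrix.trace (ρ - (Matrix.trace ρ / (n : ℂ)) • 1) = 0 := by
  simp [Matrix.trace_sub, Matrix.trace_smul, Matrix.trace_one, smul_eq_mul,
    div_mul_cancel₀ _ hn]

lemma Gfun_one (hn : (n : ℂ) ≠ 0) : Gfun n 1 = swapOp n := by
  have h1 : (1 : Mat n) - (Matrix.trace (1 : Mat n) / (n : ℂ)) • (1 : Mat n) = 0 := by
    simp [Matrix.trace_one, div_self hn]
  rw [Gfun, h1]
  simp [Matrix.trace_one, smul_smul, inv_mul_cancel₀ hn]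

lemma Gfun_add (x y : Mat n) : Gfun n (x + y) = Gfun n x + Gfun n y := by
  have key : x + y - ((Matrix.trace x + Matrix.trace y) / (n : ℂ)) • 1 =
      (x - (Matrix.trace x / (n : ℂ)) • 1) + (y - (Matrix.trace y / (n : ℂ)) • 1) := by
    rw [add_div, add_smul]; abel
  rw [Gfun, Gfun, Gfun, Matrix.trace_add, key, ← smul_add]
  congr 1
  rw [add_smul, Matrix.kronecker_add, Matrix.add_kronecker]
  abel

lemma Gfun_smul (c : ℂ) (x : Mat n) : Gfun n (c • x) = c • Gfun n x := by
  have key : c • x - (Matrix.trace (c • x) / (n : ℂ)) • 1 =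
      c • (x - (Matrix.trace x / (n : ℂ)) • 1) := by
    rw [Matrix.trace_smul, smul_sub, smul_smul, smul_eq_mul, mul_div_assoc]
  rw [Gfun, Gfun, key, Matrix.trace_smul, smul_eq_mul, smul_comm]
  congr 1
  rw [Matrix.kronecker_smul, Matrix.smul_kronecker, ← smul_smul, ← smul_add, ← smul_add]

lemma Gfun_linear : IsLinearMap ℂ (Gfun n) := ⟨Gfun_add, Gfun_smul⟩

lemma swap_conj_Gfun (ρ : Mat n) :
    swapOp n * Gfun n ρ * swapOp n = Gfun n ρ := by
  rw [Gfun, Matrix.mul_smul, Matrix.smul_mul]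
  congr 1
  rw [mul_add, mul_add, add_mul, add_mul, Matrix.mul_smul, Matrix.smul_mul,
    swap_conj_kron, swap_conj_kron, swap_mul_swap, one_mul]
  abel

lemma ptraceR_Gfun (hn : (n : ℂ) ≠ 0) (ρ : Mat n) : ptraceR (Gfun n ρ) = ρ := by
  rw [Gfun, ptraceR_smul, ptraceR_add, ptraceR_add, ptraceR_smul, ptraceR_swap,
    ptraceR_kron, ptraceR_kron, trace_hat hn, Matrix.trace_one]
  rw [Fintype.card_fin]
  rw [zero_smul, add_zero, smul_add, smul_smul, smul_smul,
    inv_mul_cancel₀ hn, one_smul]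
  rw [show (n : ℂ)⁻¹ * Matrix.trace ρ = Matrix.trace ρ / (n : ℂ) by ring]
  abel

lemma ptraceL_Gfun (hn : (n : ℂ) ≠ 0) (ρ : Mat n) : ptraceL (Gfun n ρ) = ρ := by
  rw [Gfun, ptraceL_smul, ptraceL_add, ptraceL_add, ptraceL_smul, ptraceL_swap,
    ptraceL_kron, ptraceL_kron, trace_hat hn, Matrix.trace_one]
  rw [Fintype.card_fin]
  rw [zero_smul, add_zero, smul_add, smul_smul, smul_smul,
    inv_mul_cancel₀ hn, one_smul]
  rw [show (n : ℂ)⁻¹ * Matrix.trace ρ = Matrix.trace ρ / (n : ℂ) by ring]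
  abel

end Aux

/-- characterization of time-expansion functions. A linear
`Φ : M_n → M_n ⊗ M_n` satisfies the two marginal conditions, `Φ(1) = F` and
`F·Φ(ρ)·F = Φ(ρ)`, if and only if
`Φ(ρ) = (1/n)(Tr(ρ)F + 1 ⊗ ρ̂ + ρ̂ ⊗ 1) + Ξ(ρ)` with `ρ̂ = ρ − (Tr ρ/n)·1` and
`Ξ` linear, vanishing on `1`, swap-invariant, with vanishing partial traces. -/
theorem stmt_17 (n : ℕ) (hn : 1 ≤ n)
    (Φ : Mat n → Matrix (Fin n × Fin n) (Fin n × Fin n) ℂ)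
    (hΦ : IsLinearMap ℂ Φ) :
    ((∀ ρ : Mat n, ptraceR (Φ ρ) = ρ) ∧ (∀ ρ : Mat n, ptraceL (Φ ρ) = ρ) ∧
        Φ 1 = swapOp n ∧ (∀ ρ : Mat n, swapOp n * Φ ρ * swapOp n = Φ ρ)) ↔
      (∃ Ξ : Mat n → Matrix (Fin n × Fin n) (Fin n × Fin n) ℂ,
        IsLinearMap ℂ Ξ ∧ Ξ 1 = 0 ∧
        (∀ ρ : Mat n, swapOp n * Ξ ρ * swapOp n = Ξ ρ) ∧
        (∀ ρ : Mat n, ptraceR (Ξ ρ) = 0) ∧ (∀ ρ : Mat n, ptraceL (Ξ ρ) = 0) ∧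
        ∀ ρ : Mat n,
          Φ ρ = ((n : ℂ))⁻¹ • (Matrix.trace ρ • swapOp n +
              (1 : Mat n) ⊗ₖ (ρ - (Matrix.trace ρ / (n : ℂ)) • 1) +
              (ρ - (Matrix.trace ρ / (n : ℂ)) • 1) ⊗ₖ (1 : Mat n)) + Ξ ρ) := by
  have hn0 : (n : ℂ) ≠ 0 := Nat.cast_ne_zero.mpr (by omega)
  constructor
  · rintro ⟨h1, h2, h3, h4⟩
    refine ⟨fun ρ => Φ ρ - Gfun n ρ, ?_, ?_, ?_, ?_, ?_, ?_⟩
    · constructor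
      · intro x y; rw [hΦ.map_add, Gfun_add]; abel
      · intro c x; rw [hΦ.map_smul, Gfun_smul, smul_sub]
    · show Φ 1 - Gfun n 1 = 0
      rw [h3, Gfun_one hn0, sub_self]
    · intro ρ
      show swapOp n * (Φ ρ - Gfun n ρ) * swapOp n = Φ ρ - Gfun n ρ
      rw [Matrix.mul_sub, Matrix.sub_mul, h4, swap_conj_Gfun]
    · intro ρ
      show ptraceR (Φ ρ - Gfun n ρ) = 0
      rw [ptraceR_sub, h1, ptraceR_Gfun hn0, sub_self]
    · intro ρ
      show ptraceL (Φ ρ - Gfun n ρ) = 0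
      rw [ptraceL_sub, h2, ptraceL_Gfun hn0, sub_self]
    · intro ρ
      show Φ ρ = Gfun n ρ + (Φ ρ - Gfun n ρ)
      abel
  · rintro ⟨Ξ, hΞlin, hΞ1, hΞswap, hΞR, hΞL, hdec⟩
    have hdec' : ∀ ρ : Mat n, Φ ρ = Gfun n ρ + Ξ ρ := hdec
    refine ⟨?_, ?_, ?_, ?_⟩
    · intro ρ; rw [hdec' ρ, ptraceR_add, ptraceR_Gfun hn0, hΞR, add_zero]
    · intro ρ; rw [hdec' ρ, ptraceL_add, ptraceL_Gfun hn0, hΞL, add_zero]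
    · rw [hdec' 1, hΞ1, add_zero, Gfun_one hn0]
    · intro ρ
      rw [hdec' ρ, Matrix.mul_add, Matrix.add_mul, swap_conj_Gfun, hΞswap]
end

section
/- For c ∈ ℝ define the bilinear map Θ^c : M_n × M_n → M_n by Θ^c_ρ(M) := ½(ρM + Mρ) + i·c·(ρM − Mρ). Then: (a) Θ^c_ρ(M) = ρM whenever ρM = Mρ; (b) if ρ and M are Hermitian then Θ^c_ρ(M) is Hermitian; (c) for every finite family {P_i} of mutually orthogonal orthogonal projections with Σ_i P_i = 1, matrices ρ_i, M_i ∈ M_n with P_i ρ_i P_i = ρ_i and P_i M_i P_i = M_i, and scalars λ_i, one has Θ^c_{Σ_i λ_i ρ_i}(Σ_j M_j) = Σ_i λ_i Θ^c_{ρ_i}(M_i); (d) if n ≥ 2 and c ≠ 0, then there exist ρ, M ∈ M_n with Θ^c_ρ(M) ≠ ½(ρM + Mρ). In particular, for c ≠ 0 the Hermiticity-preserving family Θ^c differs from the Jordan product, so Hermiticity together with the classical-limit conditions does not single out a unique state-rendering function. -/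
open Matrix Kronecker BigOperators ComplexOrder

/-- The one-parameter family `Θ^c_ρ(M) = ½{ρ,M} + i·c·[ρ,M]`. -/
noncomputable def ThetaC (n : ℕ) (c : ℝ) (ρ M : Mat n) : Mat n :=
  (1/2 : ℂ) • (ρ * M + M * ρ) + (Complex.I * (c : ℂ)) • (ρ * M - M * ρ)

/-- the family `Θ^c` (a) reduces to `ρM` on commuting pairs,
(b) preserves Hermiticity, (c) satisfies classical conditionability, and
(d) differs from the Jordan product when `n ≥ 2` and `c ≠ 0`; so Hermiticity
with the classical-limit conditions does not single out a unique
state-rendering function. -/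
theorem stmt_18 (n : ℕ) (hn : 1 ≤ n) (c : ℝ) :
    (∀ ρ M : Mat n, ρ * M = M * ρ → ThetaC n c ρ M = ρ * M) ∧
    (∀ ρ M : Mat n, ρ.IsHermitian → M.IsHermitian → (ThetaC n c ρ M).IsHermitian) ∧
    (∀ (k : ℕ) (P : Fin k → Mat n), (∀ i, IsOrthProj (P i)) →
      (∀ i j, i ≠ j → P i * P j = 0) → (∑ i, P i) = 1 →
      ∀ ρv Mv : Fin k → Mat n, (∀ i, P i * ρv i * P i = ρv i) →
        (∀ i, P i * Mv i * P i = Mv i) → ∀ lam : Fin k → ℂ,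
        ThetaC n c (∑ i, lam i • ρv i) (∑ j, Mv j) =
          ∑ i, lam i • ThetaC n c (ρv i) (Mv i)) ∧
    (2 ≤ n → c ≠ 0 →
      ∃ ρ M : Mat n, ThetaC n c ρ M ≠ (1/2 : ℂ) • (ρ * M + M * ρ)) := by
  refine ⟨?_, ?_, ?_, ?_⟩
  · intro ρ M h
    simp [ThetaC, h]
    module
  · intro ρ M hρ hM
    unfold Matrix.IsHermitian ThetaC
    simp only [conjTranspose_add, conjTranspose_smul, conjTranspose_sub,
      conjTranspose_mul, hρ.eq, hM.eq, star_mul', Complex.star_def,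
      Complex.conj_I, Complex.conj_ofReal, map_div₀, _root_.map_one, map_ofNat]
    module
  · intro k P hP hPO hPsum ρv Mv hρv hMv lam
    have hρP : ∀ i, ρv i * P i = ρv i := fun i => by
      rw [← hρv i, mul_assoc (P i * ρv i), (hP i).2]
    have hPρ : ∀ i, P i * ρv i = ρv i := fun i => by
      rw [← hρv i, ← mul_assoc, ← mul_assoc, (hP i).2]
    have hMP : ∀ i, Mv i * P i = Mv i := fun i => by
      rw [← hMv i, mul_assoc (P i * Mv i), (hP i).2]
    have hPM : ∀ i, P i * Mv i = Mv i := fun i => by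
      rw [← hMv i, ← mul_assoc, ← mul_assoc, (hP i).2]
    have hcross : ∀ i j, i ≠ j → ρv i * Mv j = 0 := fun i j hij => by
      rw [← hρP i, ← hPM j, mul_assoc, ← mul_assoc (P i), hPO i j hij,
        zero_mul, mul_zero]
    have hcross' : ∀ i j, i ≠ j → Mv j * ρv i = 0 := fun i j hij => by
      rw [← hMP j, ← hPρ i, mul_assoc, ← mul_assoc (P j), hPO j i (Ne.symm hij),
        zero_mul, mul_zero]
    have h1 : (∑ i, lam i • ρv i) * (∑ j, Mv j) = ∑ i, lam i • (ρv i * Mv i) := by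
      rw [Finset.sum_mul]
      refine Finset.sum_congr rfl fun i _ => ?_
      rw [smul_mul_assoc, Finset.mul_sum]
      congr 1
      rw [Finset.sum_eq_single i (fun j _ hj => hcross i j (Ne.symm hj)) (by simp)]
    have h2 : (∑ j, Mv j) * (∑ i, lam i • ρv i) = ∑ i, lam i • (Mv i * ρv i) := by
      rw [Finset.mul_sum]
      refine Finset.sum_congr rfl fun i _ => ?_
      rw [mul_smul_comm, Finset.sum_mul]
      congr 1
      rw [Finset.sum_eq_single i (fun j _ hj => hcross' i j (Ne.symm hj)) (by simp)]
    simp only [ThetaC, h1, h2, ← Finset.sum_add_distrib, ← Finset.sum_sub_distrib,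
      Finset.smul_sum]
    refine Finset.sum_congr rfl fun i _ => ?_
    simp only [smul_add, smul_sub, smul_smul]
    module
  · intro hn2 hc
    set e0 : Fin n := ⟨0, by omega⟩
    set e1 : Fin n := ⟨1, by omega⟩
    have h01 : e0 ≠ e1 := Fin.ne_of_val_ne (by norm_num)
    refine ⟨Matrix.single e0 e1 (1 : ℂ), Matrix.single e1 e0 (1 : ℂ), ?_⟩
    intro h
    have := congrFun (congrFun h e0) e0
    simp only [ThetaC, Matrix.single_mul_single_same, one_mul,
      Matrix.add_apply, Matrix.smul_apply, Matrix.sub_apply,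
      Matrix.single_apply_same, smul_eq_mul] at this
    have hz : Matrix.single e1 e1 (1:ℂ) e0 e0 = 0 := by
      simp [Matrix.single, h01, Ne.symm h01]
    rw [hz] at this
    have h2 : Complex.I * c = 0 := by linear_combination this
    simp [Complex.I_ne_zero, Complex.ofReal_eq_zero, hc] at h2
end

section
/- Let a, b ≥ 1. Suppose s₁ assigns to each positive semidefinite ρ ∈ M_a with Tr ρ ≤ 1 a matrix s₁(ρ) ∈ M_a ⊗ M_b, and s₂ assigns to each positive semidefinite ϱ ∈ M_a ⊗ M_2 with Tr ϱ ≤ 1 a matrix s₂(ϱ) ∈ M_a ⊗ M_b ⊗ M_2. Assume: (i) for every completely positive trace-non-increasing linear map I : M_2 → M_2 and every such ϱ: (id_{M_a⊗M_b} ⊗ I)(s₂(ϱ)) = s₂((id_{M_a} ⊗ I)(ϱ)); (ii) Tr_E(s₂(ϱ)) = s₁(Tr_E(ϱ)) for every such ϱ, where Tr_E denotes the partial trace over the M_2 factor; (iii) s₁(λρ) = λ·s₁(ρ) for every λ ∈ [0,1] and every positive semidefinite ρ with Tr ρ ≤ 1. Then s₁ is convex-linear on states: for all positive semidefinite ρ⁰,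 ρ¹ ∈ M_a with Tr ρ⁰ = Tr ρ¹ = 1 and all λ ∈ [0,1], s₁(λρ⁰ + (1−λ)ρ¹) = λ s₁(ρ⁰) + (1−λ) s₁(ρ¹). -/
open Matrix Kronecker BigOperators ComplexOrder

/-! ### Auxiliary lemmas -/

lemma quad_eq {n : Type} [Fintype n] (A : Matrix n n ℂ) (v : n → ℂ) :
    star v ⬝ᵥ A *ᵥ v = ∑ p, ∑ q, star (v p) * A p q * v q := by
  simp [dotProduct, Matrix.mulVec, Finset.mul_sum, mul_assoc]

lemma psd_diag_nonneg {n : Type} [Fintype n] [DecidableEq n]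
    {A : Matrix n n ℂ} (h : A.PosSemidef) (i : n) : 0 ≤ A i i := by
  have := h.dotProduct_mulVec_nonneg (Pi.single i 1)
  rw [quad_eq] at this
  simpa [Pi.single_apply, apply_ite, ite_mul, mul_ite, Finset.sum_ite_eq,
    Finset.sum_ite_eq'] using this

lemma psd_smul_s19 {n : Type} [Fintype n] {A : Matrix n n ℂ} (hA : A.PosSemidef)
    {c : ℝ} (hc : 0 ≤ c) : ((c : ℂ) • A).PosSemidef := by
  rw [Matrix.posSemidef_iff_dotProduct_mulVec]; constructor
  · rw [Matrix.IsHermitian, Matrix.conjTranspose_smul, hA.1]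
    congr 1
    simp [Complex.star_def, Complex.conj_ofReal]
  · intro x
    rw [Matrix.smul_mulVec, dotProduct_smul, smul_eq_mul]
    exact mul_nonneg (by exact_mod_cast hc) (hA.dotProduct_mulVec_nonneg x)

/-- The CP map `X ↦ (c₀ X₀₀ + c₁ X₁₁) E₀₀` on `M₂`. -/
noncomputable def Ic (c0 c1 : ℝ) : Mat 2 → Mat 2 :=
  fun X => Matrix.of fun i j =>
    if i = 0 ∧ j = 0 then (c0 : ℂ) * X 0 0 + (c1 : ℂ) * X 1 1 else 0

lemma Ic_linear (c0 c1 : ℝ) : IsLinearMap ℂ (Ic c0 c1) := by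
  constructor
  · intro X Y; ext i j
    by_cases h : i = 0 ∧ j = 0 <;> simp [Ic, h] <;> ring
  · intro r X; ext i j
    by_cases h : i = 0 ∧ j = 0 <;> simp [Ic, h] <;> ring

lemma idT_Ic_apply {α : Type} (c0 c1 : ℝ) (X : Matrix (α × Fin 2) (α × Fin 2) ℂ)
    (p q : α × Fin 2) :
    idT (Ic c0 c1) X p q =
      if p.2 = 0 ∧ q.2 = 0 then
        (c0 : ℂ) * X ((p.1, 0)) ((q.1, 0)) + (c1 : ℂ) * X ((p.1, 1)) ((q.1, 1))
      else 0 := rfl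

lemma quad_restrict {α : Type} [Fintype α] {X : Matrix (α × Fin 2) (α × Fin 2) ℂ}
    (hX : X.PosSemidef) (v : α → ℂ) (j : Fin 2) :
    0 ≤ ∑ p : α, ∑ q : α, star (v p) * X (p, j) (q, j) * v q := by
  have h := hX.dotProduct_mulVec_nonneg (fun r : α × Fin 2 => if r.2 = j then v r.1 else 0)
  rw [quad_eq] at h
  simp only [Fintype.sum_prod_type] at h
  simpa [apply_ite, ite_mul, mul_ite, mul_zero, zero_mul, star_zero,
    Finset.sum_ite_eq, Finset.sum_ite_eq'] using h

lemma Ic_CP (c0 c1 : ℝ) (h0 : 0 ≤ c0) (h1 : 0 ≤ c1) {α : Type} [Fintype α]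
    {X : Matrix (α × Fin 2) (α × Fin 2) ℂ} (hX : X.PosSemidef) :
    (idT (Ic c0 c1) X).PosSemidef := by
  rw [Matrix.posSemidef_iff_dotProduct_mulVec]; constructor
  · ext p q
    rw [Matrix.conjTranspose_apply, idT_Ic_apply, idT_Ic_apply]
    by_cases hp : p.2 = 0 <;> by_cases hq : q.2 = 0
    · have e0 : star (X (q.1, 0) (p.1, 0)) = X (p.1, 0) (q.1, 0) := by
        rw [← hX.1.apply (p.1, 0) (q.1, 0)]
      have e1 : star (X (q.1, 1) (p.1, 1)) = X (p.1, 1) (q.1, 1) := by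
        rw [← hX.1.apply (p.1, 1) (q.1, 1)]
      simp [hp, hq, star_add, star_mul', e0, e1, Complex.star_def, Complex.conj_ofReal]
    · simp [hp, hq]
    · simp [hp, hq]
    · simp [hp, hq]
  · intro x
    have e : star x ⬝ᵥ (idT (Ic c0 c1) X) *ᵥ x
        = (c0 : ℂ) * (∑ p : α, ∑ q : α,
              star (x (p, 0)) * X (p, 0) (q, 0) * x (q, 0))
        + (c1 : ℂ) * (∑ p : α, ∑ q : α,
              star (x (p, 0)) * X (p, 1) (q, 1) * x (q, 0)) := by
      rw [quad_eq]
      simp only [idT_Ic_apply, Fintype.sum_prod_type, Fin.sum_univ_two]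
      simp only [Finset.mul_sum, mul_ite, ite_mul, mul_zero, zero_mul]
      simp only [show ((1:Fin 2) = 0) = False by simp, show ((0:Fin 2) = 0) = True by simp,
        true_and, and_true, false_and, and_false, if_true, if_false, add_zero, zero_add,
        Finset.sum_const_zero]
      rw [← Finset.sum_add_distrib]
      refine Finset.sum_congr rfl fun p _ => ?_
      rw [← Finset.sum_add_distrib]
      refine Finset.sum_congr rfl fun q _ => ?_
      ring
    rw [e]
    have q0 := quad_restrict hX (fun p => x (p, 0)) 0
    have q1 := quad_restrict hX (fun p => x (p, 0)) 1
    exact add_nonneg (mul_nonneg (by exact_mod_cast h0) q0)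
      (mul_nonneg (by exact_mod_cast h1) q1)

lemma Ic_tr (c0 c1 : ℝ) (h0' : c0 ≤ 1) (h1' : c1 ≤ 1)
    (X : Mat 2) (hX : X.PosSemidef) :
    Matrix.trace (Ic c0 c1 X) ≤ Matrix.trace X := by
  have d0 := psd_diag_nonneg hX 0
  have d1 := psd_diag_nonneg hX 1
  have e1 : Matrix.trace (Ic c0 c1 X) = (c0 : ℂ) * X 0 0 + (c1 : ℂ) * X 1 1 := by
    simp [Matrix.trace, Matrix.diag, Ic, Fin.sum_univ_two]
  have e2 : Matrix.trace X = X 0 0 + X 1 1 := by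
    simp [Matrix.trace, Matrix.diag, Fin.sum_univ_two]
  rw [e1, e2]
  have l0 : (c0 : ℂ) * X 0 0 ≤ 1 * X 0 0 :=
    mul_le_mul_of_nonneg_right (by exact_mod_cast h0') d0
  have l1 : (c1 : ℂ) * X 1 1 ≤ 1 * X 1 1 :=
    mul_le_mul_of_nonneg_right (by exact_mod_cast h1') d1
  calc (c0 : ℂ) * X 0 0 + (c1 : ℂ) * X 1 1 ≤ 1 * X 0 0 + 1 * X 1 1 := add_le_add l0 l1
    _ = X 0 0 + X 1 1 := by ring

lemma ptraceR_idT_Ic {α : Type} (c0 c1 : ℝ) (X : Matrix (α × Fin 2) (α × Fin 2) ℂ) :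
    ptraceR (idT (Ic c0 c1) X) =
      Matrix.of fun p q => (c0 : ℂ) * X (p, 0) (q, 0) + (c1 : ℂ) * X (p, 1) (q, 1) := by
  ext p q
  simp [ptraceR, Fin.sum_univ_two, idT_Ic_apply]
/-- any state over time function satisfying the completeness
axiom (E) — compatibility with completely positive trace-non-increasing
operations on an auxiliary system and with the partial trace over it, together
with homogeneity — is convex-linear on states. -/
theorem stmt_19 (a b : ℕ) (ha : 1 ≤ a) (hb : 1 ≤ b)
    (s1 : Mat a → Matrix (Fin a × Fin b) (Fin a × Fin b) ℂ)
    (s2 : Matrix (Fin a × Fin 2) (Fin a × Fin 2) ℂ →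
      Matrix ((Fin a × Fin b) × Fin 2) ((Fin a × Fin b) × Fin 2) ℂ)
    (hi : ∀ I : Mat 2 → Mat 2, IsLinearMap ℂ I →
      (∀ k : ℕ, 1 ≤ k → ∀ X : Matrix (Fin k × Fin 2) (Fin k × Fin 2) ℂ,
        X.PosSemidef → (idT I X).PosSemidef) →
      (∀ X : Mat 2, X.PosSemidef → Matrix.trace (I X) ≤ Matrix.trace X) →
      ∀ ϱ : Matrix (Fin a × Fin 2) (Fin a × Fin 2) ℂ, ϱ.PosSemidef →
        Matrix.trace ϱ ≤ 1 → idT I (s2 ϱ) = s2 (idT I ϱ))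
    (hii : ∀ ϱ : Matrix (Fin a × Fin 2) (Fin a × Fin 2) ℂ, ϱ.PosSemidef →
      Matrix.trace ϱ ≤ 1 → ptraceR (s2 ϱ) = s1 (ptraceR ϱ))
    (hiii : ∀ lam : ℝ, 0 ≤ lam → lam ≤ 1 → ∀ ρ : Mat a, ρ.PosSemidef →
      Matrix.trace ρ ≤ 1 → s1 ((lam : ℂ) • ρ) = (lam : ℂ) • s1 ρ) :
    ∀ ρ0 ρ1 : Mat a, ρ0.PosSemidef → ρ1.PosSemidef →
      Matrix.trace ρ0 = 1 → Matrix.trace ρ1 = 1 →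
      ∀ lam : ℝ, 0 ≤ lam → lam ≤ 1 →
        s1 ((lam : ℂ) • ρ0 + (1 - (lam : ℂ)) • ρ1) =
          (lam : ℂ) • s1 ρ0 + (1 - (lam : ℂ)) • s1 ρ1 := by
  intro ρ0 ρ1 hρ0 hρ1 ht0 ht1 lam hl0 hl1
  classical
  -- the auxiliary two-level state ϱ = ½ ρ0 ⊗ E₀₀ + ½ ρ1 ⊗ E₁₁
  set ϱ : Matrix (Fin a × Fin 2) (Fin a × Fin 2) ℂ := Matrix.of fun p q =>
    if p.2 = 0 ∧ q.2 = 0 then (1/2 : ℂ) * ρ0 p.1 q.1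
    else if p.2 = 1 ∧ q.2 = 1 then (1/2 : ℂ) * ρ1 p.1 q.1 else 0 with hϱdef
  have hϱpsd : ϱ.PosSemidef := by
    rw [Matrix.posSemidef_iff_dotProduct_mulVec]; constructor
    · ext p q
      rw [Matrix.conjTranspose_apply]
      obtain ⟨p1, p2⟩ := p
      obtain ⟨q1, q2⟩ := q
      have e0 : star (ρ0 q1 p1) = ρ0 p1 q1 := by rw [← hρ0.1.apply p1 q1]
      have e1 : star (ρ1 q1 p1) = ρ1 p1 q1 := by rw [← hρ1.1.apply p1 q1]
      fin_cases p2 <;> fin_cases q2 <;>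
        simp [hϱdef, star_mul', e0, e1]
    · intro x
      rw [quad_eq]
      have e : ∑ p : Fin a × Fin 2, ∑ q : Fin a × Fin 2,
            star (x p) * ϱ p q * x q
          = (1/2 : ℂ) * (∑ p : Fin a, ∑ q : Fin a,
              star (x (p, 0)) * ρ0 p q * x (q, 0))
          + (1/2 : ℂ) * (∑ p : Fin a, ∑ q : Fin a,
              star (x (p, 1)) * ρ1 p q * x (q, 1)) := by
        simp only [hϱdef, Matrix.of_apply, Fintype.sum_prod_type, Fin.sum_univ_two]
        simp only [Finset.mul_sum, mul_ite, ite_mul, mul_zero, zero_mul]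
        simp only [show ((1:Fin 2) = 0) = False by simp,
          show ((0:Fin 2) = 0) = True by simp,
          show ((0:Fin 2) = 1) = False by simp,
          show ((1:Fin 2) = 1) = True by simp,
          true_and, and_true, false_and, and_false, if_true, if_false, add_zero,
          zero_add, Finset.sum_const_zero]
        rw [← Finset.sum_add_distrib]
        refine Finset.sum_congr rfl fun p _ => ?_
        congr 1
        · exact Finset.sum_congr rfl fun q _ => by ring
        · exact Finset.sum_congr rfl fun q _ => by ring
      rw [e]
      have q0 : (0:ℂ) ≤ ∑ p : Fin a, ∑ q : Fin a,
          star (x (p, 0)) * ρ0 p q * x (q, 0) := by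
        have := hρ0.dotProduct_mulVec_nonneg (fun p => x (p, 0)); rwa [quad_eq] at this
      have q1 : (0:ℂ) ≤ ∑ p : Fin a, ∑ q : Fin a,
          star (x (p, 1)) * ρ1 p q * x (q, 1) := by
        have := hρ1.dotProduct_mulVec_nonneg (fun p => x (p, 1)); rwa [quad_eq] at this
      have h2 : (0:ℂ) ≤ (1/2 : ℂ) := by
        rw [Complex.le_def]
        norm_num
      exact add_nonneg (mul_nonneg h2 q0) (mul_nonneg h2 q1)
  have hϱtreq : Matrix.trace ϱ = 1 := by
    rw [Matrix.trace, Fintype.sum_prod_type]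
    have e : ∀ p1 : Fin a, ∑ p2 : Fin 2, Matrix.diag ϱ (p1, p2)
        = (1/2 : ℂ) * ρ0 p1 p1 + (1/2 : ℂ) * ρ1 p1 p1 := by
      intro p1
      simp only [Fin.sum_univ_two, Matrix.diag, hϱdef, Matrix.of_apply]
      simp [show ((1:Fin 2) = 0) = False by simp, show ((1:Fin 2) = 1) = True by simp]
    rw [Finset.sum_congr rfl fun p1 _ => e p1]
    rw [Finset.sum_add_distrib, ← Finset.mul_sum, ← Finset.mul_sum]
    have t0 : ∑ p1 : Fin a, ρ0 p1 p1 = 1 := ht0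
    have t1 : ∑ p1 : Fin a, ρ1 p1 p1 = 1 := ht1
    rw [t0, t1]; ring
  have hϱtr : Matrix.trace ϱ ≤ 1 := le_of_eq hϱtreq
  -- the two blocks of s2 ϱ
  set B0 : Matrix (Fin a × Fin b) (Fin a × Fin b) ℂ :=
    Matrix.of (fun p q => s2 ϱ (p, 0) (q, 0)) with hB0def
  set B1 : Matrix (Fin a × Fin b) (Fin a × Fin b) ℂ :=
    Matrix.of (fun p q => s2 ϱ (p, 1) (q, 1)) with hB1def
  have key : ∀ c0 c1 : ℝ, 0 ≤ c0 → c0 ≤ 1 → 0 ≤ c1 → c1 ≤ 1 →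
      (c0 : ℂ) • B0 + (c1 : ℂ) • B1
        = s1 (((c0/2 : ℝ) : ℂ) • ρ0 + ((c1/2 : ℝ) : ℂ) • ρ1) := by
    intro c0 c1 hc0 hc0' hc1 hc1'
    have h1 := hi (Ic c0 c1) (Ic_linear c0 c1)
      (fun k _ X hX => Ic_CP c0 c1 hc0 hc1 hX)
      (Ic_tr c0 c1 hc0' hc1') ϱ hϱpsd hϱtr
    have hpsd2 : (idT (Ic c0 c1) ϱ).PosSemidef := Ic_CP c0 c1 hc0 hc1 hϱpsd
    have htr2 : Matrix.trace (idT (Ic c0 c1) ϱ) ≤ 1 := by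
      have e : Matrix.trace (idT (Ic c0 c1) ϱ)
          = ((c0/2 + c1/2 : ℝ) : ℂ) := by
        rw [Matrix.trace, Fintype.sum_prod_type]
        have e1 : ∀ p1 : Fin a, ∑ p2 : Fin 2, Matrix.diag (idT (Ic c0 c1) ϱ) (p1, p2)
            = (c0 : ℂ) * ((1/2 : ℂ) * ρ0 p1 p1) + (c1 : ℂ) * ((1/2 : ℂ) * ρ1 p1 p1) := by
          intro p1
          simp only [Fin.sum_univ_two, Matrix.diag, idT_Ic_apply, hϱdef, Matrix.of_apply]
          simp [show ((1:Fin 2) = 0) = False by simp, show ((1:Fin 2) = 1) = True by simp]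
        rw [Finset.sum_congr rfl fun p1 _ => e1 p1]
        rw [Finset.sum_add_distrib]
        simp only [← Finset.mul_sum]
        have t0 : ∑ p1 : Fin a, ρ0 p1 p1 = 1 := ht0
        have t1 : ∑ p1 : Fin a, ρ1 p1 p1 = 1 := ht1
        rw [t0, t1]
        push_cast
        ring
      rw [e]
      have hle : (c0/2 + c1/2 : ℝ) ≤ 1 := by linarith
      exact_mod_cast hle
    have h2 := hii (idT (Ic c0 c1) ϱ) hpsd2 htr2
    rw [← h1, ptraceR_idT_Ic, ptraceR_idT_Ic] at h2
    have lhs_eq : (Matrix.of fun p q =>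
          (c0 : ℂ) * s2 ϱ (p, 0) (q, 0) + (c1 : ℂ) * s2 ϱ (p, 1) (q, 1))
        = (c0 : ℂ) • B0 + (c1 : ℂ) • B1 := by
      ext p q
      simp [hB0def, hB1def]
    have rhs_eq : (Matrix.of fun p q =>
          (c0 : ℂ) * ϱ (p, 0) (q, 0) + (c1 : ℂ) * ϱ (p, 1) (q, 1))
        = ((c0/2 : ℝ) : ℂ) • ρ0 + ((c1/2 : ℝ) : ℂ) • ρ1 := by
      ext p q
      simp only [hϱdef, Matrix.of_apply, Matrix.add_apply, Matrix.smul_apply,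
        smul_eq_mul]
      simp only [show ((1:Fin 2) = 0) = False by simp,
        show ((0:Fin 2) = 0) = True by simp,
        show ((0:Fin 2) = 1) = False by simp,
        show ((1:Fin 2) = 1) = True by simp,
        true_and, and_true, false_and, and_false, if_true, if_false]
      push_cast
      ring
    rw [lhs_eq, rhs_eq] at h2
    exact h2
  -- instantiate the key identity
  have e0 := key 1 0 (by norm_num) (by norm_num) (by norm_num) (by norm_num)
  have e1 := key 0 1 (by norm_num) (by norm_num) (by norm_num) (by norm_num)
  have e2 := key lam (1 - lam) hl0 hl1 (by linarith) (by linarith)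
  have hB0 : B0 = (1/2 : ℂ) • s1 ρ0 := by
    have h := hiii (1/2) (by norm_num) (by norm_num) ρ0 hρ0 (le_of_eq ht0)
    push_cast at e0 h
    norm_num at e0 h
    exact e0.trans h
  have hB1 : B1 = (1/2 : ℂ) • s1 ρ1 := by
    have h := hiii (1/2) (by norm_num) (by norm_num) ρ1 hρ1 (le_of_eq ht1)
    push_cast at e1 h
    norm_num at e1 h
    exact e1.trans h
  -- the convex combination σ
  set σ : Mat a := (lam : ℂ) • ρ0 + (1 - (lam : ℂ)) • ρ1 with hσdef
  have hσpsd : σ.PosSemidef := by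
    have h0' : ((lam : ℂ) • ρ0).PosSemidef := psd_smul_s19 hρ0 hl0
    have h1' : ((1 - (lam : ℂ)) • ρ1).PosSemidef := by
      have hc : (1 - (lam : ℂ)) = (((1 - lam : ℝ)) : ℂ) := by push_cast; ring
      rw [hc]
      exact psd_smul_s19 hρ1 (by linarith)
    exact h0'.add h1'
  have hσtr : Matrix.trace σ = 1 := by
    rw [hσdef, Matrix.trace_add, Matrix.trace_smul, Matrix.trace_smul, ht0, ht1]
    simp
  have hhalf := hiii (1/2) (by norm_num) (by norm_num) σ hσpsd (le_of_eq hσtr)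
  have e2' : ((lam/2 : ℝ) : ℂ) • ρ0 + (((1-lam)/2 : ℝ) : ℂ) • ρ1
      = (((1/2 : ℝ)) : ℂ) • σ := by
    rw [hσdef]
    ext i j
    simp only [Matrix.add_apply, Matrix.smul_apply, smul_eq_mul]
    push_cast
    ring
  rw [e2', hhalf, hB0, hB1] at e2
  push_cast at e2
  linear_combination (norm := module) (-2 : ℂ) • e2
end
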